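/- arXiv:1809.00922 — 8 statements merged into one kernel-verified Lean document; each statement's English description precedes it below -/
import Mathlib

section
/- Let X be a topological space with a point-countable base 𝓑, let χ be an uncountable regular cardinal, and let M be a countable elementary submodel of H(χ) containing X (with its topology) and 𝓑 as elements. If x is a point in the closure of X ∩ M but x ∉ M, then every element of 𝓑 containing x belongs to M. -/
open FirstOrder

/-- The relation symbols of the language of set theory: a single binary
relation (membership). -/
def memRel : ℕ → Type
  | 2 => Unit
  | _ => Empty

/-- The first-order language of set theory. -/
def memLang : FirstOrder.Language :=
  { Functions := fun _ => Empty, Relations := memRel }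

/-- Any set of ZFC sets is a structure in the language of set theory, with the
relation symbol interpreted by genuine membership. -/
instance zfSetStructure (S : Set ZFSet) : memLang.Structure S where
  funMap {n} f _ := Empty.elim f
  RelMap {n} r v :=
    match n, r, v with
    | 2, _, v => (v 0 : ZFSet) ∈ (v 1 : ZFSet)
    | 0, r, _ => Empty.elim r
    | 1, r, _ => Empty.elim r
    | (_ + 3), r, _ => Empty.elim r

/-- `K` is an elementary submodel of `H` (as ∈-structures): `K ⊆ H` and the
inclusion preserves the truth of all first-order formulas. -/
def IsElemSubmodel (K H : Set ZFSet) : Prop :=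
  ∃ h : K ⊆ H, ∀ (n : ℕ) (φ : memLang.Formula (Fin n)) (v : Fin n → K),
    (φ.Realize fun i => (Set.inclusion h (v i) : ↥H)) ↔ φ.Realize v

/-- `HSet χ` is `H(χ)`: the class of sets belonging to some transitive set of
cardinality `< χ`, i.e. the sets hereditarily of cardinality `< χ`. -/
def HSet (χ : Cardinal.{1}) : Set ZFSet :=
  {x | ∃ t : ZFSet, x ∈ t ∧ (∀ a ∈ t, ∀ b ∈ a, b ∈ t) ∧
    Cardinal.mk ↥t.toSet < χ}

variable {χ : Cardinal.{1}}

theorem ZFSet.mem_toSet (a u : ZFSet) : a ∈ u.toSet ↔ a ∈ u := Iff.rfl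

theorem ZFSet.toSet_insert (x y : ZFSet) : (insert x y).toSet = insert x y.toSet :=
  ZFSet.coe_insert x y

theorem ZFSet.toSet_empty : (∅ : ZFSet).toSet = ∅ := ZFSet.coe_empty

theorem HSet.trans {a b : ZFSet} (ha : a ∈ HSet χ) (hb : b ∈ a) : b ∈ HSet χ := by
  obtain ⟨t, hat, htr, hc⟩ := ha
  exact ⟨t, htr a hat b hb, htr, hc⟩

theorem HSet.card_lt {s : ZFSet} (hs : s ∈ HSet χ) : Cardinal.mk ↥s.toSet < χ := by
  obtain ⟨t, hst, htr, hc⟩ := hs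
  refine lt_of_le_of_lt (Cardinal.mk_le_mk_of_subset ?_) hc
  intro z hz
  exact htr s hst z hz

theorem HSet.of_small (hreg : χ.IsRegular) (hunc : Cardinal.aleph0 < χ)
    {s : ZFSet} (hel : ∀ a ∈ s, a ∈ HSet χ)
    (hcard : Cardinal.mk ↥s.toSet < χ) : s ∈ HSet χ := by
  classical
  -- choose witnesses
  choose t hmem htr hc using fun (a : s.toSet) => hel a a.2
  -- the union
  haveI : Small.{0} s.toSet := ZFSet.small_coe s
  let F : Shrink.{0} s.toSet → ZFSet := fun i => t ((equivShrink.{0} s.toSet).symm i)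
  refine ⟨insert s (ZFSet.sUnion (ZFSet.range F)), ZFSet.mem_insert _ _, ?_, ?_⟩
  · intro a ha b hb
    rcases ZFSet.mem_insert_iff.1 ha with rfl | ha
    · -- b ∈ s : b ∈ t b ∈ range
      refine ZFSet.mem_insert_of_mem _ (ZFSet.mem_sUnion.2 ⟨t ⟨b, hb⟩, ?_, hmem _⟩)
      refine ZFSet.mem_range.2 ⟨equivShrink _ ⟨b, hb⟩, ?_⟩
      simp only [F, Equiv.symm_apply_apply]
    · rcases ZFSet.mem_sUnion.1 ha with ⟨u, hu, hau⟩
      rcases ZFSet.mem_range.1 hu with ⟨i, rfl⟩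
      refine ZFSet.mem_insert_of_mem _ (ZFSet.mem_sUnion.2 ⟨F i, hu, ?_⟩)
      exact htr _ _ hau b hb
  · -- cardinality
    have h1 : (ZFSet.sUnion (ZFSet.range F) : ZFSet).toSet ⊆ ⋃ (a : s.toSet), (t a).toSet := by
      intro z hz
      rw [ZFSet.mem_toSet] at hz
      rcases ZFSet.mem_sUnion.1 hz with ⟨u, hu, hzu⟩
      rcases ZFSet.mem_range.1 hu with ⟨i, rfl⟩
      exact Set.mem_iUnion.2 ⟨(equivShrink s.toSet).symm i, hzu⟩
    have h2 : Cardinal.mk ↥(⋃ (a : s.toSet), (t a).toSet) < χ := by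
      refine lt_of_le_of_lt Cardinal.mk_iUnion_le_sum_mk ?_
      exact Cardinal.sum_lt_of_isRegular hreg hcard fun a => hc a
    have h3 : Cardinal.mk ↥(ZFSet.sUnion (ZFSet.range F) : ZFSet).toSet < χ :=
      lt_of_le_of_lt (Cardinal.mk_le_mk_of_subset h1) h2
    rw [ZFSet.toSet_insert]
    refine lt_of_le_of_lt Cardinal.mk_insert_le ?_
    exact Cardinal.add_lt_of_lt hreg.aleph0_le h3 (lt_of_le_of_lt Cardinal.one_le_aleph0 hunc)

theorem HSet.insert' (hreg : χ.IsRegular) (hunc : Cardinal.aleph0 < χ)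
    {a b : ZFSet} (ha : a ∈ HSet χ) (hb : b ∈ HSet χ) :
    (insert a b : ZFSet) ∈ HSet χ := by
  refine HSet.of_small hreg hunc ?_ ?_
  · intro z hz
    rcases ZFSet.mem_insert_iff.1 hz with rfl | hz
    · exact ha
    · exact HSet.trans hb hz
  · rw [ZFSet.toSet_insert]
    exact lt_of_le_of_lt Cardinal.mk_insert_le
      (Cardinal.add_lt_of_lt hreg.aleph0_le (HSet.card_lt hb)
        (lt_of_le_of_lt Cardinal.one_le_aleph0 hunc))

theorem HSet.empty (hreg : χ.IsRegular) (hunc : Cardinal.aleph0 < χ) :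
    (∅ : ZFSet) ∈ HSet χ := by
  refine HSet.of_small hreg hunc (fun a ha => absurd ha (ZFSet.notMem_empty a)) ?_
  rw [ZFSet.toSet_empty]
  simpa using hreg.pos

theorem HSet.singleton (hreg : χ.IsRegular) (hunc : Cardinal.aleph0 < χ)
    {a : ZFSet} (ha : a ∈ HSet χ) : ({a} : ZFSet) ∈ HSet χ :=
  HSet.insert' hreg hunc ha (HSet.empty hreg hunc)

theorem HSet.pairSet (hreg : χ.IsRegular) (hunc : Cardinal.aleph0 < χ)
    {a b : ZFSet} (ha : a ∈ HSet χ) (hb : b ∈ HSet χ) :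
    ({a, b} : ZFSet) ∈ HSet χ :=
  HSet.insert' hreg hunc ha (HSet.singleton hreg hunc hb)

theorem HSet.pair (hreg : χ.IsRegular) (hunc : Cardinal.aleph0 < χ)
    {a b : ZFSet} (ha : a ∈ HSet χ) (hb : b ∈ HSet χ) :
    ZFSet.pair a b ∈ HSet χ :=
  HSet.pairSet hreg hunc (HSet.singleton hreg hunc ha)
    (HSet.pairSet hreg hunc ha hb)

/-- the n-th von Neumann natural as a ZFSet -/
def natZ : ℕ → ZFSet
  | 0 => ∅
  | n + 1 => insert (natZ n) (natZ n)

theorem natZ_mem_omega (n : ℕ) : natZ n ∈ ZFSet.omega := by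
  induction n with
  | zero => exact ZFSet.omega_zero
  | succ n ih => exact ZFSet.omega_succ ih

theorem natZ_mk_ofNat (n : ℕ) : ZFSet.mk (PSet.ofNat n) = natZ n := by
  induction n with
  | zero => rfl
  | succ n ih =>
    show insert (ZFSet.mk (PSet.ofNat n)) (ZFSet.mk (PSet.ofNat n)) = _
    rw [ih]; rfl

theorem mem_omega_iff {z : ZFSet} : z ∈ ZFSet.omega ↔ ∃ n, z = natZ n := by
  constructor
  · intro hz
    rw [← ZFSet.mk_out z] at hz ⊢
    rcases hz with ⟨⟨n⟩, h⟩
    exact ⟨n, by rw [ZFSet.sound h]; exact natZ_mk_ofNat n⟩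
  · rintro ⟨n, rfl⟩
    exact natZ_mem_omega n

theorem mem_natZ {b : ZFSet} {k : ℕ} (h : b ∈ natZ k) : ∃ j, b = natZ j := by
  induction k with
  | zero => exact absurd h (ZFSet.notMem_empty b)
  | succ k ih =>
    rcases ZFSet.mem_insert_iff.1 h with rfl | h
    · exact ⟨k, rfl⟩
    · exact ih h

theorem natZ_hset (hreg : χ.IsRegular) (hunc : Cardinal.aleph0 < χ) (n : ℕ) :
    natZ n ∈ HSet χ := by
  induction n with
  | zero => exact HSet.empty hreg hunc
  | succ n ih => exact HSet.insert' hreg hunc ih ih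

theorem omega_hset (hreg : χ.IsRegular) (hunc : Cardinal.aleph0 < χ) :
    ZFSet.omega ∈ HSet χ := by
  refine HSet.of_small hreg hunc ?_ ?_
  · intro a ha
    rcases mem_omega_iff.1 ha with ⟨n, rfl⟩
    exact natZ_hset hreg hunc n
  · refine lt_of_le_of_lt ?_ hunc
    have hsurj : Function.Surjective (fun n : ℕ => (⟨natZ n, (ZFSet.mem_toSet _ _).2 (natZ_mem_omega n)⟩ : ZFSet.omega.toSet)) := by
      rintro ⟨z, hz⟩
      rcases mem_omega_iff.1 ((ZFSet.mem_toSet _ _).1 hz) with ⟨n, rfl⟩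
      exact ⟨n, rfl⟩
    have : Countable ↥ZFSet.omega.toSet := hsurj.countable
    exact Cardinal.mk_le_aleph0


namespace Mem

/-- lift a variable index under one more quantifier -/
def up {α : Type} {k : ℕ} (i : α ⊕ Fin k) : α ⊕ Fin (k + 1) :=
  Sum.map id Fin.castSucc i

/-- the newly bound variable -/
def lastV {α : Type} {k : ℕ} : α ⊕ Fin (k + 1) := Sum.inr (Fin.last k)

/-- atomic membership formula between two variables -/
def memB {α : Type} {k : ℕ} (i j : α ⊕ Fin k) : memLang.BoundedFormula α k :=
  Language.Relations.boundedFormula₂ (Unit.unit : memLang.Relations 2)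
    (Language.Term.var i) (Language.Term.var j)

/-- atomic equality formula between two variables -/
def eqB {α : Type} {k : ℕ} (i j : α ⊕ Fin k) : memLang.BoundedFormula α k :=
  Language.Term.bdEqual (Language.Term.var i) (Language.Term.var j)

variable {S : Set ZFSet} {α : Type} {k : ℕ}

@[simp] theorem realize_memB (i j : α ⊕ Fin k) (v : α → S) (xs : Fin k → S) :
    (memB i j).Realize v xs ↔ ((Sum.elim v xs i : S) : ZFSet) ∈ ((Sum.elim v xs j : S) : ZFSet) := by
  have hrel : ∀ (r : memLang.Relations 2) (w : Fin 2 → S),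
      Language.Structure.RelMap r w ↔ ((w 0 : ZFSet) ∈ (w 1 : ZFSet)) := fun r w => Iff.rfl
  exact Iff.rfl

@[simp] theorem realize_eqB (i j : α ⊕ Fin k) (v : α → S) (xs : Fin k → S) :
    (eqB i j).Realize v xs ↔ ((Sum.elim v xs i : S) : ZFSet) = ((Sum.elim v xs j : S) : ZFSet) := by
  rw [eqB, Language.BoundedFormula.realize_bdEqual]
  simp [Language.Term.realize_var, Subtype.ext_iff]

@[simp] theorem elim_snoc_up (v : α → S) (xs : Fin k → S) (z : S) (i : α ⊕ Fin k) :
    Sum.elim v (Fin.snoc xs z) (up i) = Sum.elim v xs i := by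
  cases i with
  | inl a => rfl
  | inr b => simp [up]

@[simp] theorem elim_snoc_last (v : α → S) (xs : Fin k → S) (z : S) :
    Sum.elim v (Fin.snoc xs z) (lastV : α ⊕ Fin (k+1)) = z := by
  simp [lastV]

end Mem

namespace Mem
open Language BoundedFormula

variable {S : Set ZFSet} {α : Type} {k : ℕ}

/-- `∀ r, ¬ r ∈ z` -/
def emptyB (z : α ⊕ Fin k) : memLang.BoundedFormula α k :=
  BoundedFormula.all (BoundedFormula.not (memB lastV (up z)))

/-- `∀ r, r ∈ q ↔ r = n` -/
def singB (q n : α ⊕ Fin k) : memLang.BoundedFormula α k :=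
  BoundedFormula.all ((memB lastV (up q)).iff (eqB lastV (up n)))

/-- `∀ r, r ∈ q ↔ (r = n ∨ r = a)` -/
def doubB (q n a : α ⊕ Fin k) : memLang.BoundedFormula α k :=
  BoundedFormula.all ((memB lastV (up q)).iff ((eqB lastV (up n)) ⊔ (eqB lastV (up a))))

/-- `∀ r, r ∈ s ↔ (r ∈ w ∨ r = w)` -/
def succB (s w : α ⊕ Fin k) : memLang.BoundedFormula α k :=
  BoundedFormula.all ((memB lastV (up s)).iff ((memB lastV (up w)) ⊔ (eqB lastV (up w))))

/-- `∀ r, r ∈ z ↔ (r ∈ B ∧ y ∈ r)` -/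
def sepB (B y z : α ⊕ Fin k) : memLang.BoundedFormula α k :=
  BoundedFormula.all ((memB lastV (up z)).iff ((memB lastV (up B)) ⊓ (memB (up y) lastV)))

/-- `⟨n, a⟩ ∈ f` (Kuratowski) -/
def pairmemB (n a f : α ⊕ Fin k) : memLang.BoundedFormula α k :=
  BoundedFormula.ex ((memB lastV (up f)) ⊓
    BoundedFormula.all ((memB lastV (up lastV)).iff
      ((singB lastV (up (up n))) ⊔ (doubB lastV (up (up n)) (up (up a))))))

@[simp] theorem realize_emptyB (z : α ⊕ Fin k) (v : α → S) (xs : Fin k → S) :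
    (emptyB z).Realize v xs ↔ ∀ r : S, ¬ ((r : ZFSet) ∈ ((Sum.elim v xs z : S) : ZFSet)) := by
  simp only [emptyB, Language.BoundedFormula.realize_all, Language.BoundedFormula.realize_ex, Language.BoundedFormula.realize_iff, Language.BoundedFormula.realize_inf, Language.BoundedFormula.realize_sup, Language.BoundedFormula.realize_imp, Language.BoundedFormula.realize_not, realize_memB, realize_eqB, elim_snoc_up, elim_snoc_last]

@[simp] theorem realize_singB (q n : α ⊕ Fin k) (v : α → S) (xs : Fin k → S) :
    (singB q n).Realize v xs ↔
      ∀ r : S, ((r : ZFSet) ∈ ((Sum.elim v xs q : S) : ZFSet) ↔ (r : ZFSet) = (Sum.elim v xs n : S)) := by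
  simp only [singB, Language.BoundedFormula.realize_all, Language.BoundedFormula.realize_ex, Language.BoundedFormula.realize_iff, Language.BoundedFormula.realize_inf, Language.BoundedFormula.realize_sup, Language.BoundedFormula.realize_imp, Language.BoundedFormula.realize_not, realize_memB, realize_eqB, elim_snoc_up, elim_snoc_last]

@[simp] theorem realize_doubB (q n a : α ⊕ Fin k) (v : α → S) (xs : Fin k → S) :
    (doubB q n a).Realize v xs ↔
      ∀ r : S, ((r : ZFSet) ∈ ((Sum.elim v xs q : S) : ZFSet) ↔
        ((r : ZFSet) = (Sum.elim v xs n : S) ∨ (r : ZFSet) = (Sum.elim v xs a : S))) := by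
  simp only [doubB, Language.BoundedFormula.realize_all, Language.BoundedFormula.realize_ex, Language.BoundedFormula.realize_iff, Language.BoundedFormula.realize_inf, Language.BoundedFormula.realize_sup, Language.BoundedFormula.realize_imp, Language.BoundedFormula.realize_not, realize_memB, realize_eqB, elim_snoc_up, elim_snoc_last]

@[simp] theorem realize_succB (s w : α ⊕ Fin k) (v : α → S) (xs : Fin k → S) :
    (succB s w).Realize v xs ↔
      ∀ r : S, ((r : ZFSet) ∈ ((Sum.elim v xs s : S) : ZFSet) ↔
        ((r : ZFSet) ∈ ((Sum.elim v xs w : S) : ZFSet) ∨ (r : ZFSet) = (Sum.elim v xs w : S))) := by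
  simp only [succB, Language.BoundedFormula.realize_all, Language.BoundedFormula.realize_ex, Language.BoundedFormula.realize_iff, Language.BoundedFormula.realize_inf, Language.BoundedFormula.realize_sup, Language.BoundedFormula.realize_imp, Language.BoundedFormula.realize_not, realize_memB, realize_eqB, elim_snoc_up, elim_snoc_last]

@[simp] theorem realize_sepB (B y z : α ⊕ Fin k) (v : α → S) (xs : Fin k → S) :
    (sepB B y z).Realize v xs ↔
      ∀ r : S, ((r : ZFSet) ∈ ((Sum.elim v xs z : S) : ZFSet) ↔
        ((r : ZFSet) ∈ ((Sum.elim v xs B : S) : ZFSet) ∧ ((Sum.elim v xs y : S) : ZFSet) ∈ (r : ZFSet))) := by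
  simp only [sepB, Language.BoundedFormula.realize_all, Language.BoundedFormula.realize_ex, Language.BoundedFormula.realize_iff, Language.BoundedFormula.realize_inf, Language.BoundedFormula.realize_sup, Language.BoundedFormula.realize_imp, Language.BoundedFormula.realize_not, realize_memB, realize_eqB, elim_snoc_up, elim_snoc_last]

/-- relativized version of `pair n a ∈ f` -/
def pmRel (S : Set ZFSet) (N A F : ZFSet) : Prop :=
  ∃ p : S, (p : ZFSet) ∈ F ∧ ∀ q : S, ((q : ZFSet) ∈ (p : ZFSet) ↔
    ((∀ r : S, ((r : ZFSet) ∈ (q : ZFSet) ↔ (r : ZFSet) = N)) ∨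
     (∀ r : S, ((r : ZFSet) ∈ (q : ZFSet) ↔ ((r : ZFSet) = N ∨ (r : ZFSet) = A)))))

@[simp] theorem realize_pairmemB (n a f : α ⊕ Fin k) (v : α → S) (xs : Fin k → S) :
    (pairmemB n a f).Realize v xs ↔
      pmRel S (Sum.elim v xs n : S) (Sum.elim v xs a : S) (Sum.elim v xs f : S) := by
  simp only [pairmemB, pmRel, singB, doubB, Language.BoundedFormula.realize_all, Language.BoundedFormula.realize_ex, Language.BoundedFormula.realize_iff, Language.BoundedFormula.realize_inf, Language.BoundedFormula.realize_sup, Language.BoundedFormula.realize_imp, Language.BoundedFormula.realize_not, realize_memB, realize_eqB, elim_snoc_up, elim_snoc_last]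

end Mem

namespace Mem
open Language BoundedFormula

variable {S : Set ZFSet} {α : Type} {k : ℕ}

/-- `w` is `ω`: has empty member, closed under successor, every member empty or successor -/
def omegaB (w : α ⊕ Fin k) : memLang.BoundedFormula α k :=
  (BoundedFormula.ex ((memB lastV (up w)) ⊓ emptyB lastV)) ⊓
  ((BoundedFormula.all ((memB lastV (up w)).imp
      (BoundedFormula.ex ((memB lastV (up (up w))) ⊓ succB lastV (up lastV))))) ⊓
   (BoundedFormula.all ((memB lastV (up w)).imp
      ((emptyB lastV) ⊔
        (BoundedFormula.ex ((memB lastV (up (up w))) ⊓ succB (up lastV) lastV))))))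

/-- relativized characterization of `omegaB` -/
def omegaRel (S : Set ZFSet) (W : ZFSet) : Prop :=
  (∃ z : S, (z : ZFSet) ∈ W ∧ ∀ r : S, ¬ ((r : ZFSet) ∈ (z : ZFSet))) ∧
  ((∀ u : S, (u : ZFSet) ∈ W → ∃ s : S, (s : ZFSet) ∈ W ∧
      (∀ r : S, ((r : ZFSet) ∈ (s : ZFSet) ↔ ((r : ZFSet) ∈ (u : ZFSet) ∨ (r : ZFSet) = (u : ZFSet))))) ∧
   (∀ u : S, (u : ZFSet) ∈ W → ((∀ r : S, ¬ ((r : ZFSet) ∈ (u : ZFSet))) ∨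
      ∃ z : S, (z : ZFSet) ∈ W ∧
        (∀ r : S, ((r : ZFSet) ∈ (u : ZFSet) ↔ ((r : ZFSet) ∈ (z : ZFSet) ∨ (r : ZFSet) = (z : ZFSet)))))))

@[simp] theorem realize_omegaB (w : α ⊕ Fin k) (v : α → S) (xs : Fin k → S) :
    (omegaB w).Realize v xs ↔ omegaRel S (Sum.elim v xs w : S) := by
  simp only [omegaB, omegaRel, emptyB, succB,
    Language.BoundedFormula.realize_all, Language.BoundedFormula.realize_ex,
    Language.BoundedFormula.realize_iff, Language.BoundedFormula.realize_inf,
    Language.BoundedFormula.realize_sup, Language.BoundedFormula.realize_imp,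
    Language.BoundedFormula.realize_not, realize_memB, realize_eqB, elim_snoc_up, elim_snoc_last]

/-- `f` is a functional relation whose pairs have first coordinates in `w`
and whose values cover `A` -/
def surjB (w A f : α ⊕ Fin k) : memLang.BoundedFormula α k :=
  (BoundedFormula.all ((memB lastV (up A)).imp
      (BoundedFormula.ex ((memB lastV (up (up w))) ⊓
        pairmemB lastV (up lastV) (up (up f)))))) ⊓
  (BoundedFormula.all (BoundedFormula.all (BoundedFormula.all
    (((pairmemB (up (up lastV)) (up lastV) (up (up (up f)))) ⊓
      (pairmemB (up (up lastV)) lastV (up (up (up f))))).imp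
      (eqB (up lastV) lastV)))))

/-- relativized characterization of `surjB` -/
def surjRel (S : Set ZFSet) (W A F : ZFSet) : Prop :=
  (∀ a : S, (a : ZFSet) ∈ A → ∃ n : S, (n : ZFSet) ∈ W ∧ pmRel S n a F) ∧
  (∀ n a b : S, pmRel S n a F → pmRel S n b F → (a : ZFSet) = (b : ZFSet))

@[simp] theorem realize_surjB (w A f : α ⊕ Fin k) (v : α → S) (xs : Fin k → S) :
    (surjB w A f).Realize v xs ↔
      surjRel S (Sum.elim v xs w : S) (Sum.elim v xs A : S) (Sum.elim v xs f : S) := by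
  simp only [surjB, surjRel,
    Language.BoundedFormula.realize_all, Language.BoundedFormula.realize_ex,
    Language.BoundedFormula.realize_inf, Language.BoundedFormula.realize_imp,
    realize_memB, realize_eqB, realize_pairmemB, elim_snoc_up, elim_snoc_last]
  tauto

end Mem

namespace Mem

variable {χ : Cardinal.{1}}

theorem empty_abs {Z : ZFSet} (hZ : Z ∈ HSet χ) :
    (∀ r : ↥(HSet χ), ¬ ((r : ZFSet) ∈ Z)) ↔ Z = ∅ := by
  constructor
  · intro h
    refine ZFSet.eq_empty Z |>.2 fun z hz => h ⟨z, HSet.trans hZ hz⟩ hz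
  · rintro rfl r
    exact ZFSet.notMem_empty _

theorem sing_abs {Q N : ZFSet} (hQ : Q ∈ HSet χ) (hN : N ∈ HSet χ) :
    (∀ r : ↥(HSet χ), ((r : ZFSet) ∈ Q ↔ (r : ZFSet) = N)) ↔ Q = {N} := by
  constructor
  · intro h
    ext z
    rw [ZFSet.mem_singleton]
    constructor
    · intro hz; exact (h ⟨z, HSet.trans hQ hz⟩).1 hz
    · rintro rfl; exact (h ⟨z, hN⟩).2 rfl
  · rintro rfl r; exact ZFSet.mem_singleton

theorem doub_abs {Q N A : ZFSet} (hQ : Q ∈ HSet χ) (hN : N ∈ HSet χ) (hA : A ∈ HSet χ) :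
    (∀ r : ↥(HSet χ), ((r : ZFSet) ∈ Q ↔ ((r : ZFSet) = N ∨ (r : ZFSet) = A))) ↔
      Q = {N, A} := by
  constructor
  · intro h
    ext z
    rw [ZFSet.mem_insert_iff, ZFSet.mem_singleton]
    constructor
    · intro hz; exact (h ⟨z, HSet.trans hQ hz⟩).1 hz
    · rintro (rfl | rfl)
      · exact (h ⟨z, hN⟩).2 (Or.inl rfl)
      · exact (h ⟨z, hA⟩).2 (Or.inr rfl)
  · rintro rfl r
    rw [ZFSet.mem_insert_iff, ZFSet.mem_singleton]
  
theorem succ_abs {Sx W : ZFSet} (hS : Sx ∈ HSet χ) (hW : W ∈ HSet χ) :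
    (∀ r : ↥(HSet χ), ((r : ZFSet) ∈ Sx ↔ ((r : ZFSet) ∈ W ∨ (r : ZFSet) = W))) ↔
      Sx = insert W W := by
  constructor
  · intro h
    ext z
    rw [ZFSet.mem_insert_iff]
    constructor
    · intro hz
      rcases (h ⟨z, HSet.trans hS hz⟩).1 hz with h' | h'
      · exact Or.inr h'
      · exact Or.inl h'
    · rintro (rfl | hz)
      · exact (h ⟨z, hW⟩).2 (Or.inr rfl)
      · exact (h ⟨z, HSet.trans hW hz⟩).2 (Or.inl hz)
  · rintro rfl r
    rw [ZFSet.mem_insert_iff]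
    tauto

theorem pm_abs (hreg : χ.IsRegular) (hunc : Cardinal.aleph0 < χ)
    {N A F : ZFSet} (hN : N ∈ HSet χ) (hA : A ∈ HSet χ) (hF : F ∈ HSet χ) :
    pmRel (HSet χ) N A F ↔ ZFSet.pair N A ∈ F := by
  constructor
  · rintro ⟨p, hpF, hp⟩
    have hpH : (p : ZFSet) ∈ HSet χ := p.2
    have : (p : ZFSet) = ZFSet.pair N A := by
      ext z
      rw [ZFSet.pair, ZFSet.mem_insert_iff, ZFSet.mem_singleton]
      constructor
      · intro hz
        have hzH : z ∈ HSet χ := HSet.trans hpH hz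
        rcases (hp ⟨z, hzH⟩).1 hz with h | h
        · exact Or.inl ((sing_abs hzH hN).1 h)
        · exact Or.inr ((doub_abs hzH hN hA).1 h)
      · rintro (rfl | rfl)
        · exact (hp ⟨{N}, HSet.singleton hreg hunc hN⟩).2
            (Or.inl ((sing_abs (HSet.singleton hreg hunc hN) hN).2 rfl))
        · exact (hp ⟨{N, A}, HSet.pairSet hreg hunc hN hA⟩).2
            (Or.inr ((doub_abs (HSet.pairSet hreg hunc hN hA) hN hA).2 rfl))
    rwa [this] at hpF
  · intro h
    refine ⟨⟨ZFSet.pair N A, HSet.pair hreg hunc hN hA⟩, h, fun q => ?_⟩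
    have hqH : (q : ZFSet) ∈ HSet χ := q.2
    show (q : ZFSet) ∈ ZFSet.pair N A ↔ _
    rw [ZFSet.pair, ZFSet.mem_insert_iff, ZFSet.mem_singleton,
      sing_abs hqH hN, doub_abs hqH hN hA]

theorem omega_abs (hreg : χ.IsRegular) (hunc : Cardinal.aleph0 < χ)
    {W : ZFSet} (hW : W ∈ HSet χ) :
    omegaRel (HSet χ) W ↔ W = ZFSet.omega := by
  constructor
  · rintro ⟨⟨z, hzW, hz⟩, hsucc, hcase⟩
    -- genuine facts
    have hzE : (z : ZFSet) = ∅ := (empty_abs z.2).1 hz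
    have hWz : (∅ : ZFSet) ∈ W := hzE ▸ hzW
    have hWs : ∀ u : ZFSet, u ∈ W → insert u u ∈ W := by
      intro u huW
      have huH : u ∈ HSet χ := HSet.trans hW huW
      obtain ⟨s, hsW, hs⟩ := hsucc ⟨u, huH⟩ huW
      have : (s : ZFSet) = insert u u := (succ_abs s.2 huH).1 hs
      rwa [this] at hsW
    have hWc : ∀ u : ZFSet, u ∈ W → u = ∅ ∨ ∃ v, v ∈ W ∧ u = insert v v := by
      intro u huW
      have huH : u ∈ HSet χ := HSet.trans hW huW
      rcases hcase ⟨u, huH⟩ huW with h | ⟨v, hvW, hv⟩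
      · exact Or.inl ((empty_abs huH).1 h)
      · exact Or.inr ⟨v, hvW, (succ_abs huH v.2).1 hv⟩
    ext u
    constructor
    · intro huW
      induction u using ZFSet.inductionOn with
      | _ u ih =>
        rcases hWc u huW with rfl | ⟨v, hvW, rfl⟩
        · exact ZFSet.omega_zero
        · exact ZFSet.omega_succ (ih v (ZFSet.mem_insert v v) hvW)
    · intro hu
      rcases mem_omega_iff.1 hu with ⟨n, rfl⟩
      clear hu
      induction n with
      | zero => exact hWz
      | succ n ih => exact hWs _ ih
  · rintro rfl
    refine ⟨⟨⟨∅, HSet.empty hreg hunc⟩, ZFSet.omega_zero, fun r => ZFSet.notMem_empty _⟩,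
      ?_, ?_⟩
    · rintro ⟨u, huH⟩ huW
      refine ⟨⟨insert u u, HSet.trans hW (ZFSet.omega_succ huW)⟩,
        ZFSet.omega_succ huW, fun r => ?_⟩
      exact ZFSet.mem_insert_iff.trans (or_comm)
    · rintro ⟨u, huH⟩ huW
      rcases mem_omega_iff.1 huW with ⟨n, hn⟩
      cases n with
      | zero =>
        refine Or.inl fun r hr => ?_
        rw [hn] at hr
        exact ZFSet.notMem_empty _ hr
      | succ n =>
        refine Or.inr ⟨⟨natZ n, HSet.trans hW (natZ_mem_omega n)⟩, natZ_mem_omega n,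
          fun r => ?_⟩
        rw [hn]
        exact ZFSet.mem_insert_iff.trans (or_comm)

open Language

@[simp] theorem snoc_zero {S : Set ZFSet} (xs : Fin 0 → S) (a : S) :
    (Fin.snoc xs a : Fin 1 → S) 0 = a := by
  have : (0 : Fin 1) = Fin.last 0 := rfl
  rw [this, Fin.snoc_last]

variable {S : Set ZFSet}

theorem formula_realize {α : Type} {φ : memLang.Formula α} {v : α → S} :
    φ.Realize v ↔ BoundedFormula.Realize φ v default := Iff.rfl

/-- `∃ z ∀ w (w ∈ z ↔ (w ∈ B ∧ y ∈ w))` -/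
def sepF1 : memLang.Formula (Fin 2) := (sepB (.inl 0) (.inl 1) (.inr 0)).ex
def sepF2 : memLang.Formula (Fin 3) := sepB (.inl 0) (.inl 1) (.inl 2)

theorem realize_sepF1 (v : Fin 2 → S) :
    sepF1.Realize v ↔ ∃ z : S, ∀ r : S,
      ((r : ZFSet) ∈ (z : ZFSet) ↔ ((r : ZFSet) ∈ ((v 0 : S) : ZFSet) ∧ ((v 1 : S) : ZFSet) ∈ (r : ZFSet))) := by
  rw [formula_realize, sepF1, BoundedFormula.realize_ex]
  simp only [realize_sepB, Sum.elim_inl, Sum.elim_inr, snoc_zero]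

theorem realize_sepF2 (v : Fin 3 → S) :
    sepF2.Realize v ↔ ∀ r : S,
      ((r : ZFSet) ∈ ((v 2 : S) : ZFSet) ↔ ((r : ZFSet) ∈ ((v 0 : S) : ZFSet) ∧ ((v 1 : S) : ZFSet) ∈ (r : ZFSet))) := by
  rw [formula_realize, sepF2]
  simp only [realize_sepB, Sum.elim_inl]

def omegaF1 : memLang.Formula (Fin 0) := (omegaB (.inr 0)).ex
def omegaF2 : memLang.Formula (Fin 1) := omegaB (.inl 0)

theorem realize_omegaF1 (v : Fin 0 → S) :
    omegaF1.Realize v ↔ ∃ z : S, omegaRel S z := by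
  rw [formula_realize, omegaF1, BoundedFormula.realize_ex]
  simp only [realize_omegaB, Sum.elim_inr, snoc_zero]

theorem realize_omegaF2 (v : Fin 1 → S) :
    omegaF2.Realize v ↔ omegaRel S (v 0) := by
  rw [formula_realize, omegaF2]
  simp only [realize_omegaB, Sum.elim_inl]

def emptyF1 : memLang.Formula (Fin 0) := (emptyB (.inr 0)).ex
def emptyF2 : memLang.Formula (Fin 1) := emptyB (.inl 0)

theorem realize_emptyF1 (v : Fin 0 → S) :
    emptyF1.Realize v ↔ ∃ z : S, ∀ r : S, ¬ ((r : ZFSet) ∈ (z : ZFSet)) := by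
  rw [formula_realize, emptyF1, BoundedFormula.realize_ex]
  simp only [realize_emptyB, Sum.elim_inr, snoc_zero]

theorem realize_emptyF2 (v : Fin 1 → S) :
    emptyF2.Realize v ↔ ∀ r : S, ¬ ((r : ZFSet) ∈ ((v 0 : S) : ZFSet)) := by
  rw [formula_realize, emptyF2]
  simp only [realize_emptyB, Sum.elim_inl]

def succF1 : memLang.Formula (Fin 1) := (succB (.inr 0) (.inl 0)).ex
def succF2 : memLang.Formula (Fin 2) := succB (.inl 1) (.inl 0)

theorem realize_succF1 (v : Fin 1 → S) :
    succF1.Realize v ↔ ∃ z : S, ∀ r : S,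
      ((r : ZFSet) ∈ (z : ZFSet) ↔ ((r : ZFSet) ∈ ((v 0 : S) : ZFSet) ∨ (r : ZFSet) = ((v 0 : S) : ZFSet))) := by
  rw [formula_realize, succF1, BoundedFormula.realize_ex]
  simp only [realize_succB, Sum.elim_inl, Sum.elim_inr, snoc_zero]

theorem realize_succF2 (v : Fin 2 → S) :
    succF2.Realize v ↔ ∀ r : S,
      ((r : ZFSet) ∈ ((v 1 : S) : ZFSet) ↔ ((r : ZFSet) ∈ ((v 0 : S) : ZFSet) ∨ (r : ZFSet) = ((v 0 : S) : ZFSet))) := by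
  rw [formula_realize, succF2]
  simp only [realize_succB, Sum.elim_inl]

def surjF1 : memLang.Formula (Fin 2) := (surjB (.inl 0) (.inl 1) (.inr 0)).ex
def surjF2 : memLang.Formula (Fin 3) := surjB (.inl 0) (.inl 1) (.inl 2)

theorem realize_surjF1 (v : Fin 2 → S) :
    surjF1.Realize v ↔ ∃ z : S, surjRel S (v 0) (v 1) z := by
  rw [formula_realize, surjF1, BoundedFormula.realize_ex]
  simp only [realize_surjB, Sum.elim_inl, Sum.elim_inr, snoc_zero]

theorem realize_surjF2 (v : Fin 3 → S) :
    surjF2.Realize v ↔ surjRel S (v 0) (v 1) (v 2) := by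
  rw [formula_realize, surjF2]
  simp only [realize_surjB, Sum.elim_inl]

def valF1 : memLang.Formula (Fin 2) := (pairmemB (.inl 0) (.inr 0) (.inl 1)).ex
def valF2 : memLang.Formula (Fin 3) := pairmemB (.inl 0) (.inl 2) (.inl 1)

theorem realize_valF1 (v : Fin 2 → S) :
    valF1.Realize v ↔ ∃ z : S, pmRel S (v 0) z (v 1) := by
  rw [formula_realize, valF1, BoundedFormula.realize_ex]
  simp only [realize_pairmemB, Sum.elim_inl, Sum.elim_inr, snoc_zero]

theorem realize_valF2 (v : Fin 3 → S) :
    valF2.Realize v ↔ pmRel S (v 0) (v 2) (v 1) := by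
  rw [formula_realize, valF2]
  simp only [realize_pairmemB, Sum.elim_inl]

theorem natZ_mem_of_lt : ∀ {j k : ℕ}, j < k → natZ j ∈ natZ k := by
  intro j k
  induction k with
  | zero => intro h; exact absurd h (Nat.not_lt_zero j)
  | succ k ih =>
    intro h
    rcases Nat.lt_succ_iff_lt_or_eq.1 h with h | rfl
    · exact ZFSet.mem_insert_of_mem _ (ih h)
    · exact ZFSet.mem_insert _ _

theorem natZ_injective : Function.Injective natZ := by
  intro j k h
  by_contra hne
  rcases Nat.lt_or_ge j k with hlt | hge
  · exact ZFSet.mem_irrefl _ (h ▸ natZ_mem_of_lt hlt)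
  · have hlt : k < j := lt_of_le_of_ne hge (Ne.symm hne)
    exact ZFSet.mem_irrefl _ (h.symm ▸ natZ_mem_of_lt hlt)

end Mem


/- STATEMENT 0: Let `X` be a topological space (coded by its point set `X` and
its set `T` of open sets, with topology `τ` on the points of `X`) with a
point-countable base `𝓑`, let `χ` be an uncountable regular cardinal, and let
`M` be a countable elementary submodel of `H(χ)` with `X`, its topology and
`𝓑` as elements.  If `x` lies in the closure of `X ∩ M` but `x ∉ M`, then
every member of `𝓑` containing `x` belongs to `M`. -/
open Mem in
theorem stmt_0 (χ : Cardinal.{1}) (hreg : χ.IsRegular)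
    (hunc : Cardinal.aleph0 < χ)
    (X T 𝓑 : ZFSet)
    (hTsub : ∀ U ∈ T, U ⊆ X)
    (h𝓑T : 𝓑 ⊆ T)
    (τ : TopologicalSpace ↥X.toSet)
    (hopen : ∀ s : Set ↥X.toSet,
      @IsOpen _ τ s ↔ ∃ U ∈ T, s = {p : ↥X.toSet | (p : ZFSet) ∈ U})
    (hbase : ∀ U ∈ T, ∀ x : ZFSet, x ∈ U → ∃ V, V ∈ 𝓑 ∧ x ∈ V ∧ V ⊆ U)
    (hpc : ∀ x ∈ X, {U : ZFSet | U ∈ 𝓑 ∧ x ∈ U}.Countable)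
    (M : Set ZFSet) (hMc : M.Countable)
    (helem : IsElemSubmodel M (HSet χ))
    (hXM : X ∈ M) (hTM : T ∈ M) (h𝓑M : 𝓑 ∈ M)
    (x : ↥X.toSet)
    (hx1 : (x : ZFSet) ∉ M)
    (hx2 : x ∈ @closure _ τ {p : ↥X.toSet | (p : ZFSet) ∈ M}) :
    ∀ U : ZFSet, U ∈ 𝓑 → (x : ZFSet) ∈ U → U ∈ M := by
  classical
  intro U hU𝓑 hxU
  obtain ⟨hsub, helem'⟩ := helem
  letI := τ
  -- step 1 : find a point of `X ∩ M` inside `U`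
  have hUopen : IsOpen {p : ↥X.toSet | (p : ZFSet) ∈ U} :=
    (hopen _).2 ⟨U, h𝓑T hU𝓑, rfl⟩
  obtain ⟨y, hyU, hyM⟩ :=
    (mem_closure_iff.1 hx2) _ hUopen hxU
  have hyU : (y : ZFSet) ∈ U := hyU
  have hyM : (y : ZFSet) ∈ M := hyM
  set Y : ZFSet := (y : ZFSet) with hYdef
  -- step 2 : the point-countable trace of the base at `y`
  set A : ZFSet := ZFSet.sep (fun B => Y ∈ B) 𝓑 with hAdef
  have hmemA : ∀ z : ZFSet, z ∈ A ↔ z ∈ 𝓑 ∧ Y ∈ z := fun z => ZFSet.mem_sep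
  have h𝓑H : 𝓑 ∈ HSet χ := hsub h𝓑M
  have hAH : A ∈ HSet χ := by
    refine HSet.of_small hreg hunc (fun z hz => HSet.trans h𝓑H ((hmemA z).1 hz).1) ?_
    refine lt_of_le_of_lt (Cardinal.mk_le_mk_of_subset fun z hz => ?_) (HSet.card_lt h𝓑H)
    rw [ZFSet.mem_toSet] at hz ⊢
    exact ((hmemA z).1 hz).1
  -- step 3 : `A ∈ M` by elementarity
  have hAM : A ∈ M := by
    have h1 : sepF1.Realize (fun i => Set.inclusion hsub ((![⟨𝓑, h𝓑M⟩, ⟨Y, hyM⟩] : Fin 2 → M) i)) := by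
      rw [realize_sepF1]
      refine ⟨⟨A, hAH⟩, fun r => ?_⟩
      simp only [Matrix.cons_val_zero, Matrix.cons_val_one, Matrix.head_cons, Set.coe_inclusion]
      exact hmemA r
    have h2 := (helem' 2 sepF1 _).1 h1
    rw [realize_sepF1] at h2
    obtain ⟨z, hz⟩ := h2
    have h3 : sepF2.Realize (![⟨𝓑, h𝓑M⟩, ⟨Y, hyM⟩, z] : Fin 3 → M) := by
      rw [realize_sepF2]
      simp only [Matrix.cons_val_zero, Matrix.cons_val_one, Matrix.head_cons,
        Matrix.cons_val_two, Matrix.tail_cons] at hz ⊢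
      exact hz
    have h4 := (helem' 3 sepF2 _).2 h3
    rw [realize_sepF2] at h4
    simp only [Matrix.cons_val_zero, Matrix.cons_val_one, Matrix.head_cons,
      Matrix.cons_val_two, Matrix.tail_cons, Set.coe_inclusion] at h4
    have hzH : (z : ZFSet) ∈ HSet χ := hsub z.2
    have hzA : (z : ZFSet) = A := by
      ext w
      constructor
      · intro hw
        exact (hmemA w).2 ((h4 ⟨w, HSet.trans hzH hw⟩).1 hw)
      · intro hw
        have hwH : w ∈ HSet χ := HSet.trans h𝓑H ((hmemA w).1 hw).1
        exact (h4 ⟨w, hwH⟩).2 ((hmemA w).1 hw)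
    exact hzA ▸ z.2
  -- step 4 : `ω ∈ M`
  have homegaH : ZFSet.omega ∈ HSet χ := omega_hset hreg hunc
  obtain ⟨ωM, hωM⟩ : ∃ w : M, (w : ZFSet) = ZFSet.omega := by
    have h1 : omegaF1.Realize (fun i => Set.inclusion hsub ((default : Fin 0 → M) i)) := by
      rw [realize_omegaF1]
      exact ⟨⟨ZFSet.omega, homegaH⟩, (omega_abs hreg hunc homegaH).2 rfl⟩
    have h2 := (helem' 0 omegaF1 _).1 h1
    rw [realize_omegaF1] at h2
    obtain ⟨w, hw⟩ := h2
    have h3 : omegaF2.Realize (![w] : Fin 1 → M) := by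
      rw [realize_omegaF2]
      simpa using hw
    have h4 := (helem' 1 omegaF2 _).2 h3
    rw [realize_omegaF2] at h4
    simp only [Matrix.cons_val_zero, Set.coe_inclusion] at h4
    exact ⟨w, (omega_abs hreg hunc (hsub w.2)).1 h4⟩
  -- step 5 : all natural numbers belong to `M`
  have hnatM : ∀ n : ℕ, ∃ z : M, (z : ZFSet) = natZ n := by
    intro n
    induction n with
    | zero =>
      have h1 : emptyF1.Realize (fun i => Set.inclusion hsub ((default : Fin 0 → M) i)) := by
        rw [realize_emptyF1]
        exact ⟨⟨∅, HSet.empty hreg hunc⟩, fun r => ZFSet.notMem_empty _⟩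
      have h2 := (helem' 0 emptyF1 _).1 h1
      rw [realize_emptyF1] at h2
      obtain ⟨z, hz⟩ := h2
      have h3 : emptyF2.Realize (![z] : Fin 1 → M) := by
        rw [realize_emptyF2]
        simpa using hz
      have h4 := (helem' 1 emptyF2 _).2 h3
      rw [realize_emptyF2] at h4
      simp only [Matrix.cons_val_zero, Set.coe_inclusion] at h4
      exact ⟨z, (empty_abs (hsub z.2)).1 h4⟩
    | succ n ih =>
      obtain ⟨nM, hnM⟩ := ih
      have hnH : natZ n ∈ HSet χ := natZ_hset hreg hunc n
      have h1 : succF1.Realize (fun i => Set.inclusion hsub ((![nM] : Fin 1 → M) i)) := by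
        rw [realize_succF1]
        refine ⟨⟨insert (natZ n) (natZ n), HSet.insert' hreg hunc hnH hnH⟩, fun r => ?_⟩
        simp only [Matrix.cons_val_zero, Set.coe_inclusion, hnM]
        exact ZFSet.mem_insert_iff.trans or_comm
      have h2 := (helem' 1 succF1 _).1 h1
      rw [realize_succF1] at h2
      obtain ⟨z, hz⟩ := h2
      have h3 : succF2.Realize (![nM, z] : Fin 2 → M) := by
        rw [realize_succF2]
        simp only [Matrix.cons_val_zero, Matrix.cons_val_one, Matrix.head_cons] at hz ⊢
        exact hz
      have h4 := (helem' 2 succF2 _).2 h3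
      rw [realize_succF2] at h4
      simp only [Matrix.cons_val_zero, Matrix.cons_val_one, Matrix.head_cons,
        Set.coe_inclusion, hnM] at h4
      refine ⟨z, ?_⟩
      have := (succ_abs (hsub z.2) hnH).1 h4
      simpa [natZ] using this
  -- step 6 : a surjection from `ω` onto `A` in `H(χ)`
  have hUA : U ∈ A := (hmemA U).2 ⟨hU𝓑, hyU⟩
  have hAcnt : A.toSet.Countable := by
    refine Set.Countable.mono ?_ (hpc Y (hTsub U (h𝓑T hU𝓑) hyU))
    intro z hz
    rw [ZFSet.mem_toSet] at hz
    exact (hmemA z).1 hz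
  have hAne : A.toSet.Nonempty := ⟨U, (ZFSet.mem_toSet _ _).2 hUA⟩
  obtain ⟨g, hg⟩ := hAcnt.exists_surjective hAne
  set F : ZFSet := ZFSet.range (fun k : ℕ => ZFSet.pair (natZ k) ((g k : ZFSet))) with hFdef
  have hFmem : ∀ z : ZFSet, z ∈ F ↔ ∃ k : ℕ, ZFSet.pair (natZ k) ((g k : ZFSet)) = z := by
    intro z
    rw [hFdef, ZFSet.mem_range]
  have hgA : ∀ k : ℕ, ((g k : ZFSet)) ∈ A := fun k => (ZFSet.mem_toSet _ _).1 (g k).2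
  have hFH : F ∈ HSet χ := by
    refine HSet.of_small hreg hunc ?_ ?_
    · intro z hz
      obtain ⟨k, hk⟩ := (hFmem z).1 hz
      rw [← hk]
      exact HSet.pair hreg hunc (natZ_hset hreg hunc k) (HSet.trans hAH (hgA k))
    · refine lt_of_le_of_lt ?_ hunc
      have hsurj : Function.Surjective
          (fun k : ℕ => (⟨ZFSet.pair (natZ k) ((g k : ZFSet)),
            (ZFSet.mem_toSet _ _).2 ((hFmem _).2 ⟨k, rfl⟩)⟩ : F.toSet)) := by
        rintro ⟨z, hz⟩
        obtain ⟨k, hk⟩ := (hFmem z).1 ((ZFSet.mem_toSet _ _).1 hz)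
        exact ⟨k, Subtype.ext hk⟩
      have : Countable ↥F.toSet := hsurj.countable
      exact Cardinal.mk_le_aleph0
  have hP1 : ∀ a : ZFSet, a ∈ A → ∃ n : ZFSet, n ∈ ZFSet.omega ∧ ZFSet.pair n a ∈ F := by
    intro a ha
    obtain ⟨k, hk⟩ := hg ⟨a, (ZFSet.mem_toSet _ _).2 ha⟩
    refine ⟨natZ k, natZ_mem_omega k, (hFmem _).2 ⟨k, ?_⟩⟩
    rw [hk]
  have hP2 : ∀ n a b : ZFSet, ZFSet.pair n a ∈ F → ZFSet.pair n b ∈ F → a = b := by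
    intro n a b ha hb
    obtain ⟨k, hk⟩ := (hFmem _).1 ha
    obtain ⟨k', hk'⟩ := (hFmem _).1 hb
    obtain ⟨hk1, hk2⟩ := ZFSet.pair_injective hk
    obtain ⟨hk1', hk2'⟩ := ZFSet.pair_injective hk'
    have : k = k' := natZ_injective (hk1.trans hk1'.symm)
    rw [← hk2, ← hk2', this]
  -- step 7 : get such a surjection inside `M`
  obtain ⟨fM, hfQ1, hfQ2⟩ : ∃ f : M, (∀ a : ZFSet, a ∈ A →
      ∃ n : ZFSet, n ∈ ZFSet.omega ∧ ZFSet.pair n a ∈ (f : ZFSet)) ∧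
      (∀ n a b : ↥(HSet χ), ZFSet.pair n a ∈ (f : ZFSet) → ZFSet.pair n b ∈ (f : ZFSet) →
        (a : ZFSet) = b) := by
    have h1 : surjF1.Realize (fun i => Set.inclusion hsub ((![ωM, ⟨A, hAM⟩] : Fin 2 → M) i)) := by
      rw [realize_surjF1]
      refine ⟨⟨F, hFH⟩, ?_, ?_⟩
      · intro a ha
        simp only [Matrix.cons_val_zero, Matrix.cons_val_one, Matrix.head_cons,
          Set.coe_inclusion, hωM] at ha ⊢
        obtain ⟨n, hn, hpair⟩ := hP1 a ha
        refine ⟨⟨n, HSet.trans homegaH hn⟩, hn, ?_⟩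
        exact (pm_abs hreg hunc (HSet.trans homegaH hn) a.2 hFH).2 hpair
      · intro n a b hna hnb
        have h1 := (pm_abs hreg hunc n.2 a.2 hFH).1 hna
        have h2 := (pm_abs hreg hunc n.2 b.2 hFH).1 hnb
        exact hP2 _ _ _ h1 h2
    have h2 := (helem' 2 surjF1 _).1 h1
    rw [realize_surjF1] at h2
    obtain ⟨f, hf⟩ := h2
    have h3 : surjF2.Realize (![ωM, ⟨A, hAM⟩, f] : Fin 3 → M) := by
      rw [realize_surjF2]
      simp only [Matrix.cons_val_zero, Matrix.cons_val_one, Matrix.head_cons,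
        Matrix.cons_val_two, Matrix.tail_cons] at hf ⊢
      exact hf
    have h4 := (helem' 3 surjF2 _).2 h3
    rw [realize_surjF2] at h4
    simp only [Matrix.cons_val_zero, Matrix.cons_val_one, Matrix.head_cons,
      Matrix.cons_val_two, Matrix.tail_cons, Set.coe_inclusion, hωM] at h4
    obtain ⟨hQ1, hQ2⟩ := h4
    have hfH : (f : ZFSet) ∈ HSet χ := hsub f.2
    refine ⟨f, ?_, ?_⟩
    · intro a ha
      obtain ⟨n, hn, hpm⟩ := hQ1 ⟨a, HSet.trans hAH ha⟩ ha
      exact ⟨n, hn, (pm_abs hreg hunc n.2 (HSet.trans hAH ha) hfH).1 hpm⟩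
    · intro n a b hna hnb
      exact hQ2 n a b ((pm_abs hreg hunc n.2 a.2 hfH).2 hna)
        ((pm_abs hreg hunc n.2 b.2 hfH).2 hnb)
  -- step 8 : conclude `U ∈ M`
  have hUH : U ∈ HSet χ := HSet.trans hAH hUA
  have hfH : (fM : ZFSet) ∈ HSet χ := hsub fM.2
  obtain ⟨n, hnω, hnpair⟩ := hfQ1 U hUA
  obtain ⟨k, hk⟩ := mem_omega_iff.1 hnω
  obtain ⟨nM, hnM⟩ := hnatM k
  have hnMn : (nM : ZFSet) = n := by rw [hnM, hk]
  have hnH : (n : ZFSet) ∈ HSet χ := HSet.trans homegaH hnω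
  have h1 : valF1.Realize (fun i => Set.inclusion hsub ((![nM, fM] : Fin 2 → M) i)) := by
    rw [realize_valF1]
    refine ⟨⟨U, hUH⟩, ?_⟩
    simp only [Matrix.cons_val_zero, Matrix.cons_val_one, Matrix.head_cons,
      Set.coe_inclusion, hnMn]
    exact (pm_abs hreg hunc hnH hUH hfH).2 hnpair
  have h2 := (helem' 2 valF1 _).1 h1
  rw [realize_valF1] at h2
  obtain ⟨z, hz⟩ := h2
  have h3 : valF2.Realize (![nM, fM, z] : Fin 3 → M) := by
    rw [realize_valF2]
    simp only [Matrix.cons_val_zero, Matrix.cons_val_one, Matrix.head_cons,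
      Matrix.cons_val_two, Matrix.tail_cons] at hz ⊢
    exact hz
  have h4 := (helem' 3 valF2 _).2 h3
  rw [realize_valF2] at h4
  simp only [Matrix.cons_val_zero, Matrix.cons_val_one, Matrix.head_cons,
    Matrix.cons_val_two, Matrix.tail_cons, Set.coe_inclusion] at h4
  have hzH : (z : ZFSet) ∈ HSet χ := hsub z.2
  have hpairz : ZFSet.pair (nM : ZFSet) (z : ZFSet) ∈ (fM : ZFSet) :=
    (pm_abs hreg hunc (hsub nM.2) hzH hfH).1 h4
  have : (U : ZFSet) = (z : ZFSet) := by
    rw [hnMn] at hpairz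
    exact hfQ2 ⟨n, hnH⟩ ⟨U, hUH⟩ ⟨z, hzH⟩ hnpair hpairz
  exact this ▸ z.2
end

section
/- Define the Sierpiński coloring s : [ℝ]² → {0,1} using a well-ordering <_wo of ℝ by s({x,y}) = 0 iff <_wo and the usual order < agree on {x,y}. Then every subset Y of ℝ on which s is constant on [Y]² is either well-ordered or reverse well-ordered by the usual order <; in particular no such Y contains a subset order-isomorphic to the integers ℤ. -/
/-!
Any subset of a well-order is well-founded for the restricted relation. If the well-ordering `r`
agrees with `<` on every pair from `Y`, then `<` restricted to `Y` is a subrelation of `r`; if it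
disagrees on every pair, then so is `>`. Either way `Y` is well-founded for `<` or for `>`, and a
strictly monotone copy of `ℤ` inside `Y` would give an infinite descending chain for both.
-/

namespace Set

variable {α β : Type*}

theorem wellFoundedOn_lt_of_forall_iff_lt [LinearOrder α] {r : α → α → Prop} {s : Set α}
    (hr : WellFounded r) (h : ∀ x ∈ s, ∀ y ∈ s, x ≠ y → (r x y ↔ x < y)) :
    s.WellFoundedOn (· < ·) :=
  WellFoundedOn.mono' (fun a ha b hb hab => (h a ha b hb hab.ne).2 hab) hr.wellFoundedOn

theorem wellFoundedOn_gt_of_forall_not_iff_lt [LinearOrder α] {r : α → α → Prop} {s : Set α}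
    (hr : WellFounded r) (h : ∀ x ∈ s, ∀ y ∈ s, x ≠ y → ¬(r x y ↔ x < y)) :
    s.WellFoundedOn (· > ·) :=
  WellFoundedOn.mono'
    (fun a ha b hb hab =>
      by_contra fun hrab => h a ha b hb hab.ne' (iff_of_false hrab hab.not_gt))
    hr.wellFoundedOn

theorem not_wellFoundedOn_of_range_subset {r : α → α → Prop} {r' : β → β → Prop} {f : β → α}
    {s : Set α} (hf : ∀ a b, r' a b → r (f a) (f b)) (hr' : ¬WellFounded r')
    (hfs : range f ⊆ s) : ¬s.WellFoundedOn r := fun hs =>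
  hr' (Subrelation.wf (hf _ _) (wellFoundedOn_range.1 (hs.subset hfs)))

end Set

theorem stmt_1 (r : ℝ → ℝ → Prop) (hr : IsWellOrder ℝ r) (Y : Set ℝ)
    (hconst : (∀ x ∈ Y, ∀ y ∈ Y, x ≠ y → (r x y ↔ x < y)) ∨
              (∀ x ∈ Y, ∀ y ∈ Y, x ≠ y → ¬(r x y ↔ x < y))) :
    (Y.WellFoundedOn (· < ·) ∨ Y.WellFoundedOn (· > ·)) ∧
      ¬ ∃ f : ℤ → ℝ, StrictMono f ∧ Set.range f ⊆ Y := by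
  have hY : Y.WellFoundedOn (· < ·) ∨ Y.WellFoundedOn (· > ·) :=
    hconst.imp (Set.wellFoundedOn_lt_of_forall_iff_lt hr.wf)
      (Set.wellFoundedOn_gt_of_forall_not_iff_lt hr.wf)
  refine ⟨hY, ?_⟩
  rintro ⟨f, hf, hfY⟩
  rcases hY with hlt | hgt
  · exact Set.not_wellFoundedOn_of_range_subset (fun _ _ hab => hf hab)
      (fun h => NoMinOrder.not_acc (0 : ℤ) (h.apply 0)) hfY hlt
  · exact Set.not_wellFoundedOn_of_range_subset (r := (· > ·)) (r' := (· > ·))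
      (fun _ _ hab => hf hab)
      (fun h => NoMaxOrder.not_acc (0 : ℤ) (h.apply 0)) hfY hgt
end

section
/- For every well-ordering <_wo of ℝ, the Sierpiński coloring s : [ℝ]² → {0,1} (where s({x,y}) = 0 iff <_wo agrees with the usual order on {x,y}) has no monochromatic subset homeomorphic to the rational numbers ℚ. That is, for every Y ⊆ ℝ homeomorphic to ℚ, both colors occur on [Y]². -/
/-!
If all pairs of `Y` had colour 0, the usual order `<` would be contained in the well-order on `Y`,
hence well-founded on `Y`; if all had colour 1, the same would hold for `>`. But a nonempty
subset of `ℝ` on which `<` is well-founded has an isolated point: its minimum `m`, cut out by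
`Iio m'` where `m'` is the least element of `Y` above `m` (or all of `Y` if there is none).
Dually for `>`. A space homeomorphic to `ℚ` has no isolated points.
-/

theorem Set.IsWF.exists_isOpen_singleton {α : Type*} [LinearOrder α] [TopologicalSpace α]
    [ClosedIciTopology α] {Y : Set α} (hY : Y.IsWF) (hne : Y.Nonempty) :
    ∃ y : Y, IsOpen ({y} : Set Y) := by
  set m := hY.min hne
  have hm_le : ∀ y ∈ Y, m ≤ y := fun y hy => hY.min_le hne hy
  refine ⟨⟨m, hY.min_mem hne⟩, ?_⟩
  by_cases hU : {y ∈ Y | m < y}.Nonempty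
  · have hU_wf : Set.IsWF {y ∈ Y | m < y} := hY.mono fun _ hy => hy.1
    set m' := hU_wf.min hU
    have hsingleton : ({⟨m, hY.min_mem hne⟩} : Set Y) = Subtype.val ⁻¹' Set.Iio m' := by
      ext ⟨y, hy⟩
      simp only [Set.mem_singleton_iff, Subtype.mk.injEq, Set.mem_preimage, Set.mem_Iio]
      constructor
      · rintro rfl
        exact (hU_wf.min_mem hU).2
      · intro hy_lt
        by_contra hym
        exact hU_wf.not_lt_min hU
          ⟨hy, lt_of_le_of_ne (hm_le y hy) (Ne.symm hym)⟩ hy_lt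
    rw [hsingleton]
    exact isOpen_Iio.preimage continuous_subtype_val
  · have huniv : ({⟨m, hY.min_mem hne⟩} : Set Y) = Set.univ := by
      refine Set.eq_univ_of_forall fun ⟨y, hy⟩ => Subtype.ext ?_
      exact ((hm_le y hy).eq_or_lt.resolve_right fun hlt => hU ⟨y, hy, hlt⟩).symm
    rw [huniv]
    exact isOpen_univ

theorem Set.WellFoundedOn.exists_isOpen_singleton_of_gt {α : Type*} [LinearOrder α]
    [TopologicalSpace α] [ClosedIicTopology α] {Y : Set α} (hY : Y.WellFoundedOn (· > ·))
    (hne : Y.Nonempty) : ∃ y : Y, IsOpen ({y} : Set Y) :=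
  Set.IsWF.exists_isOpen_singleton (α := αᵒᵈ) hY hne

theorem stmt_2 (r : ℝ → ℝ → Prop) (hr : IsWellOrder ℝ r) (Y : Set ℝ)
    (hY : Nonempty (Y ≃ₜ ℚ)) :
    (∃ x ∈ Y, ∃ y ∈ Y, x ≠ y ∧ (r x y ↔ x < y)) ∧
    (∃ x ∈ Y, ∃ y ∈ Y, x ≠ y ∧ ¬(r x y ↔ x < y)) := by
  obtain ⟨h⟩ := hY
  have hne : Y.Nonempty := ⟨_, (h.symm 0).2⟩
  -- `ℚ` has no isolated points
  have hperfect : ∀ y : Y, ¬IsOpen ({y} : Set Y) := fun y hy =>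
    not_isOpen_singleton (h y) (by simpa using h.isOpenMap _ hy)
  have hwf : Y.WellFoundedOn r := hr.wf.wellFoundedOn
  constructor
  · by_contra hc
    have hgt_sub_r : ∀ a ∈ Y, ∀ b ∈ Y, b < a → r a b := fun a ha b hb hab => by
      by_contra hrab
      exact hc ⟨a, ha, b, hb, hab.ne', iff_of_false hrab hab.not_gt⟩
    obtain ⟨y, hy⟩ := Set.WellFoundedOn.exists_isOpen_singleton_of_gt
      (hwf.mono' hgt_sub_r) hne
    exact hperfect y hy
  · by_contra hc
    have hlt_sub_r : ∀ a ∈ Y, ∀ b ∈ Y, a < b → r a b := fun a ha b hb hab => by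
      by_contra hrab
      exact hc ⟨a, ha, b, hb, hab.ne, fun h => hrab (h.mpr hab)⟩
    obtain ⟨y, hy⟩ := Set.IsWF.exists_isOpen_singleton (hwf.mono' hlt_sub_r) hne
    exact hperfect y hy
end

section
/- If X is a σ-discrete metric space, then there exists a coloring c : [X]² → ℕ such that for every subspace Y ⊆ X homeomorphic to ℚ, every natural number occurs as a color on [Y]², i.e., c''[Y]² = ℕ. -/
/-!
A countable union of discrete sets is a countable union of uniformly discrete sets, and such a
cover yields a level function `lev : X → ℕ` with `2⁻¹ ^ max (lev x) (lev y) ≤ dist x y` for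
`x ≠ y`. Call `z` near `e` when `dist z e < 2⁻¹ ^ (lev e + 2)`. For `lev x < lev y` the colour
of `{x, y}` scans the levels `m` from a cutoff of order `-log₂ (dist x y)` up to `lev x`, marks
`m` with `P` (resp. `Q`) when some point of level `m` is near `x` but not `y` (resp. near `y` but
not `x`), and counts the passages from a `P`-level to the next `Q`-level.

Inside a copy `Y` of `ℚ`, every point is a limit of points of `Y` of arbitrarily high level, so
`Y` contains a chain `p 0, p 1, …` of increasing levels in which `p (n + 2)` is much closer to
`p n` than the scale of `p (n + 1)`. For `x = p (2k+1)` and `y = p (2k+2)` the odd terms cluster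
at `x` and the even terms at `y`, and separation forces `P` at the levels of `p 1, p 3, …`, `Q`
at those of `p 2, p 4, …`, no `P` between the levels of `p (2i+1)` and `p (2i+2)` and no `Q`
between those of `p (2i)` and `p (2i+1)`. So the pair `{x, y}` has colour `k`.
-/

open Filter Topology Metric Set

namespace SigmaDiscrete

noncomputable section

def scale (n : ℕ) : ℝ := 2⁻¹ ^ n

lemma scale_pos (n : ℕ) : 0 < scale n := by unfold scale; positivity

lemma scale_strictAnti : StrictAnti scale :=
  fun _ _ h => pow_lt_pow_right_of_lt_one₀ (by norm_num) (by norm_num) h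

lemma scale_antitone : Antitone scale := scale_strictAnti.antitone

lemma scale_add (n k : ℕ) : scale (n + k) = scale n / 2 ^ k := by
  simp [scale, pow_add, div_eq_mul_inv]

lemma exists_scale_lt {ε : ℝ} (hε : 0 < ε) : ∃ n, scale n < ε :=
  exists_pow_lt_of_lt_one hε (by norm_num)

section Levels

variable {X : Type*} [MetricSpace X]

def LevelSeparated (lev : X → ℕ) : Prop :=
  ∀ x y, x ≠ y → scale (max (lev x) (lev y)) ≤ dist x y

lemma eventually_nhdsNE_notMem_of_pairwise_le_dist {s : Set X} {r : ℝ} (hr : 0 < r)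
    (hs : s.Pairwise fun a b => r ≤ dist a b) (x : X) : ∀ᶠ y in 𝓝[≠] x, y ∉ s := by
  have hsub : (s ∩ ball x (r / 2)).Subsingleton := by
    intro a ⟨has, hax⟩ b ⟨hbs, hbx⟩
    by_contra hab
    have := dist_triangle_right a b x
    rw [mem_ball] at hax hbx
    linarith [hs has hbs hab]
  have hfar : ((s ∩ ball x (r / 2)) \ {x})ᶜ ∈ 𝓝 x :=
    (hsub.anti sdiff_subset).finite.isClosed.compl_mem_nhds fun h => h.2 rfl
  filter_upwards [self_mem_nhdsWithin,
    nhdsWithin_le_nhds (inter_mem hfar (ball_mem_nhds x (half_pos hr)))]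
    with y hyx ⟨hy, hyr⟩ hys
  exact hy ⟨⟨hys, hyr⟩, hyx⟩

lemma exists_pairwise_le_dist_cover (D : ℕ → Set X) (hD : ∀ n, DiscreteTopology (D n))
    (hcov : ⋃ n, D n = univ) :
    ∃ E : ℕ → Set X, (∀ x, ∃ n, x ∈ E n) ∧
      ∀ n, ∃ r > 0, (E n).Pairwise fun a b => r ≤ dist a b := by
  let E (m : ℕ) : Set X :=
    {x ∈ D m.unpair.1 | ∀ y ∈ D m.unpair.1, dist y x < scale m.unpair.2 → y = x}
  refine ⟨E, fun x => ?_, fun m => ⟨_, scale_pos m.unpair.2, fun a ha b hb hab => ?_⟩⟩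
  · obtain ⟨n, hxn⟩ := iUnion_eq_univ_iff.mp hcov x
    obtain ⟨ε, hε, hiso⟩ :=
      Metric.isOpen_singleton_iff.mp (isOpen_discrete {(⟨x, hxn⟩ : D n)})
    obtain ⟨k, hk⟩ := exists_scale_lt hε
    refine ⟨Nat.pair n k, ?_⟩
    simp only [E, Nat.unpair_pair, mem_ofPred_eq]
    exact ⟨hxn, fun y hy hyx => congrArg Subtype.val (hiso ⟨y, hy⟩ (hyx.trans hk))⟩
  · by_contra hlt
    exact hab (ha.2 b hb.1 (by rw [dist_comm]; exact not_le.mp hlt)).symm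

lemma exists_levelSeparated (D : ℕ → Set X) (hD : ∀ n, DiscreteTopology (D n))
    (hcov : ⋃ n, D n = univ) : ∃ lev : X → ℕ, LevelSeparated lev := by
  obtain ⟨E, hcover, hsep⟩ := exists_pairwise_le_dist_cover D hD hcov
  choose N hN using hcover
  have hiso : ∀ x, ∃ L, ∀ y, y ≠ x → N y ≤ N x → scale L ≤ dist y x := by
    intro x
    have hev : ∀ᶠ y in 𝓝[≠] x, ∀ n ∈ Iic (N x), y ∉ E n :=
      (eventually_all_finite (finite_Iic _)).2 fun n _ => by
        obtain ⟨r, hr, hE⟩ := hsep n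
        exact eventually_nhdsNE_notMem_of_pairwise_le_dist hr hE x
    obtain ⟨ε, hε, hball⟩ := Metric.eventually_nhds_iff.1 (eventually_nhdsWithin_iff.1 hev)
    obtain ⟨L, hL⟩ := exists_scale_lt hε
    refine ⟨L, fun y hyx hNy => le_of_not_gt fun hy => ?_⟩
    exact hball (hy.trans hL) hyx (N y) hNy (hN y)
  choose lev hlev using hiso
  refine ⟨lev, fun x y hxy => ?_⟩
  rcases le_total (N y) (N x) with h | h
  · rw [dist_comm]
    exact (scale_antitone (le_max_left _ _)).trans (hlev x y hxy.symm h)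
  · exact (scale_antitone (le_max_right _ _)).trans (hlev y x hxy h)

end Levels

lemma preperfect_of_homeomorph {X Z : Type*} [TopologicalSpace X] [TopologicalSpace Z]
    [PerfectSpace Z] {Y : Set X} (e : Y ≃ₜ Z) : Preperfect Y := by
  intro u hu
  have hY : (𝓝[≠] (⟨u, hu⟩ : Y)).NeBot := by
    rw [← map_neBot_iff e, e.map_punctured_nhds_eq]
    infer_instance
  have hval := IsEmbedding.subtypeVal.map_nhdsWithin_eq {(⟨u, hu⟩ : Y)}ᶜ ⟨u, hu⟩
  rw [image_val_compl, image_singleton] at hval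
  rw [accPt_principal_iff_nhdsWithin, ← hval]
  exact hY.map _

section Crowded

variable {X : Type*} [MetricSpace X] {lev : X → ℕ} {Y : Set X}

lemma Preperfect.exists_dist_lt_lt_level (hY : Preperfect Y) (hsep : LevelSeparated lev)
    {u : X} (hu : u ∈ Y) {ε : ℝ} (hε : 0 < ε) (B : ℕ) :
    ∃ v ∈ Y, dist u v < ε ∧ B < lev v := by
  have hlow : {v | lev v ≤ B}.Pairwise fun a b => scale B ≤ dist a b :=
    fun a ha b hb hab => (scale_antitone (max_le ha hb)).trans (hsep a b hab)
  have : (𝓝[≠] u ⊓ 𝓟 Y).NeBot := hY u hu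
  have hev : ∀ᶠ v in 𝓝[≠] u ⊓ 𝓟 Y, (v ∉ {v | lev v ≤ B} ∧ dist v u < ε) ∧ v ∈ Y :=
    (((eventually_nhdsNE_notMem_of_pairwise_le_dist (scale_pos B) hlow u).and
      (nhdsWithin_le_nhds (ball_mem_nhds u hε))).filter_mono inf_le_left).and
      (mem_inf_of_right (mem_principal_self Y))
  obtain ⟨v, ⟨hvB, hvu⟩, hvY⟩ := hev.exists
  exact ⟨v, hvY, by rwa [dist_comm], not_le.mp hvB⟩

end Crowded

section Transitions

open Classical in
def transitions (P Q : ℕ → Prop) (a b : ℕ) : ℕ :=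
  ((Finset.Icc a b).filter fun m =>
    Q m ∧ ∃ m' ∈ Finset.Ico a m, P m' ∧ ∀ t ∈ Finset.Ioo m' m, ¬ Q t).card

lemma exists_lt_le_succ {ℓ : ℕ → ℕ} {m N : ℕ} (h₀ : ℓ 0 < m) (hN : m ≤ ℓ N) :
    ∃ n < N, ℓ n < m ∧ m ≤ ℓ (n + 1) := by
  have hex : ∃ j, m ≤ ℓ j := ⟨N, hN⟩
  have hpos : Nat.find hex ≠ 0 := fun h => by
    have := Nat.find_spec hex
    rw [h] at this
    omega
  refine ⟨Nat.find hex - 1, ?_, not_le.mp (Nat.find_min hex (by omega)), ?_⟩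
  · have := Nat.find_min' hex hN
    omega
  · rw [Nat.sub_add_cancel (Nat.one_le_iff_ne_zero.mpr hpos)]
    exact Nat.find_spec hex

variable {P Q : ℕ → Prop} {ℓ : ℕ → ℕ} {c k : ℕ}

lemma exists_window_of_forall_not_gap (hc₀ : ℓ 0 < c)
    (hnotQ : ∀ i ≤ k, ∀ m, ℓ (2 * i) < m → m ≤ ℓ (2 * i + 1) → ¬ Q m)
    {m : ℕ} (hcm : c ≤ m) (hm : m ≤ ℓ (2 * k + 1)) (hQm : Q m) :
    ∃ i < k, ℓ (2 * i + 1) < m ∧ m ≤ ℓ (2 * i + 2) := by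
  obtain ⟨n, hn, hlt, hle⟩ := exists_lt_le_succ (hc₀.trans_le hcm) hm
  obtain ⟨i, rfl | rfl⟩ := Nat.even_or_odd' n
  · exact absurd hQm (hnotQ i (by omega) m hlt hle)
  · exact ⟨i, by omega, hlt, hle⟩

lemma transitions_eq (hℓ : StrictMono ℓ) (hc₀ : ℓ 0 < c) (hc₁ : c ≤ ℓ 1)
    (hP : ∀ i < k, P (ℓ (2 * i + 1))) (hQ : ∀ i < k, Q (ℓ (2 * i + 2)))
    (hnotP : ∀ i < k, ∀ m, ℓ (2 * i + 1) < m → m ≤ ℓ (2 * i + 2) → ¬ P m)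
    (hnotQ : ∀ i ≤ k, ∀ m, ℓ (2 * i) < m → m ≤ ℓ (2 * i + 1) → ¬ Q m) :
    transitions P Q c (ℓ (2 * k + 1)) = k := by
  let μ (i : ℕ) : ℕ := sInf {t | ℓ (2 * i + 1) < t ∧ Q t}
  have hμ : ∀ i < k, (ℓ (2 * i + 1) < μ i ∧ Q (μ i)) ∧ μ i ≤ ℓ (2 * i + 2) ∧
      ∀ t, ℓ (2 * i + 1) < t → t < μ i → ¬ Q t := by
    intro i hi
    have hmem : ℓ (2 * i + 2) ∈ {t | ℓ (2 * i + 1) < t ∧ Q t} := ⟨hℓ (by omega), hQ i hi⟩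
    exact ⟨Nat.sInf_mem ⟨_, hmem⟩, Nat.sInf_le hmem,
      fun t h1 h2 hQt => Nat.notMem_of_lt_sInf h2 ⟨h1, hQt⟩⟩
  have hmono := hℓ.monotone
  rw [transitions]
  trans ((Finset.range k).image μ).card
  · congr 1
    ext m
    simp only [Finset.mem_filter, Finset.mem_Icc, Finset.mem_Ico, Finset.mem_Ioo,
      Finset.mem_image, Finset.mem_range]
    constructor
    · rintro ⟨⟨hcm, hm⟩, hQm, m', ⟨hcm', hm'm⟩, hPm', hgap⟩
      obtain ⟨i, hi, hlt, hle⟩ := exists_window_of_forall_not_gap hc₀ hnotQ hcm hm hQm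
      obtain ⟨⟨hμlt, hQμ⟩, -, hμmin⟩ := hμ i hi
      refine ⟨i, hi, le_antisymm (Nat.sInf_le ⟨hlt, hQm⟩) (not_lt.mp fun hμm => ?_)⟩
      have hm' : m' ≤ ℓ (2 * i + 1) := not_lt.mp fun h => hnotP i hi m' h (by omega) hPm'
      exact hgap (μ i) ⟨by omega, hμm⟩ hQμ
    · rintro ⟨i, hi, rfl⟩
      obtain ⟨⟨hμlt, hQμ⟩, hμle, hμmin⟩ := hμ i hi
      have h1 : ℓ 1 ≤ ℓ (2 * i + 1) := hmono (by omega)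
      have h2 : ℓ (2 * i + 2) ≤ ℓ (2 * k + 1) := hmono (by omega)
      exact ⟨⟨by omega, by omega⟩, hQμ, ℓ (2 * i + 1), ⟨by omega, hμlt⟩, hP i hi,
        fun t ht => hμmin t ht.1 ht.2⟩
  · rw [Finset.card_image_of_injOn, Finset.card_range]
    intro i hi j hj hij
    simp only [Finset.coe_range, mem_Iio] at hi hj
    obtain ⟨⟨hi₁, -⟩, hi₂, -⟩ := hμ i hi
    obtain ⟨⟨hj₁, -⟩, hj₂, -⟩ := hμ j hj
    by_contra hne
    rcases Nat.lt_or_gt_of_ne hne with h | h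
    · have := hmono (show 2 * i + 2 ≤ 2 * j + 1 by omega)
      omega
    · have := hmono (show 2 * j + 2 ≤ 2 * i + 1 by omega)
      omega

end Transitions

section Coloring

variable {X : Type*} [MetricSpace X]

def Near (lev : X → ℕ) (z e : X) : Prop := dist z e < scale (lev e + 2)

def PrivateAt (lev : X → ℕ) (x y : X) (m : ℕ) : Prop :=
  ∃ e, lev e = m ∧ Near lev x e ∧ ¬ Near lev y e

def cutoff (x y : X) : ℕ := sInf {n | scale n ≤ 2 * dist x y}

def orderedColor (lev : X → ℕ) (x y : X) : ℕ :=
  transitions (PrivateAt lev x y) (PrivateAt lev y x) (cutoff x y) (lev x)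

def color (lev : X → ℕ) (x y : X) : ℕ :=
  if lev x < lev y then orderedColor lev x y
  else if lev y < lev x then orderedColor lev y x else 0

lemma color_comm (lev : X → ℕ) (x y : X) : color lev x y = color lev y x := by
  unfold color
  split_ifs <;> first | rfl | omega

variable {lev : X → ℕ}

lemma not_near_of_lt (hsep : LevelSeparated lev) {q z e : X} (hlev : lev q < lev e)
    (hqz : dist q z ≤ scale (lev e + 2)) : ¬ Near lev z e := by
  intro hze
  have hqe := hsep q e fun h => hlev.ne (congrArg lev h)
  rw [max_eq_right hlev.le] at hqe
  have hquarter : scale (lev e + 2) = scale (lev e) / 4 := by rw [scale_add]; norm_num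
  linarith [dist_triangle q z e, scale_pos (lev e), show dist z e < _ from hze]

end Coloring

section Chain

variable {X : Type*} [MetricSpace X] {lev : X → ℕ}

structure IsChain (lev : X → ℕ) (p : ℕ → X) : Prop where
  strictMono : StrictMono (lev ∘ p)
  dist_zero_one : dist (p 0) (p 1) < scale (lev (p 0) + 3)
  dist_step : ∀ n, dist (p n) (p (n + 2)) < scale (lev (p (n + 1)) + 3)

lemma Preperfect.exists_isChain {Y : Set X} (hY : Preperfect Y) (hsep : LevelSeparated lev)
    (hne : Y.Nonempty) : ∃ p : ℕ → X, (∀ n, p n ∈ Y) ∧ IsChain lev p := by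
  choose! next hnextY hnext using fun u (hu : u ∈ Y) (n : ℕ) =>
    Preperfect.exists_dist_lt_lt_level hY hsep hu (scale_pos (n + 3)) n
  obtain ⟨z, hz⟩ := hne
  let q (n : ℕ) : X × X :=
    Nat.rec (z, next z (lev z)) (fun _ pr => (pr.2, next pr.1 (lev pr.2))) n
  have hqY : ∀ n, (q n).1 ∈ Y ∧ (q n).2 ∈ Y := by
    intro n
    induction n with
    | zero => exact ⟨hz, hnextY z hz _⟩
    | succ n ih => exact ⟨ih.2, hnextY _ ih.1 _⟩
  have hstep : ∀ n, dist (q n).1 (q (n + 2)).1 < scale (lev (q (n + 1)).1 + 3) ∧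
      lev (q (n + 1)).1 < lev (q (n + 2)).1 := fun n => hnext _ (hqY n).1 _
  refine ⟨fun n => (q n).1, fun n => (hqY n).1,
    ⟨?_, (hnext z hz _).1, fun n => (hstep n).1⟩⟩
  refine strictMono_nat_of_lt_succ fun n => ?_
  cases n with
  | zero => exact (hnext z hz _).2
  | succ n => exact (hstep n).2

variable {p : ℕ → X}

lemma IsChain.lev_lt_succ (hp : IsChain lev p) (n : ℕ) : lev (p n) < lev (p (n + 1)) :=
  hp.strictMono n.lt_succ_self

lemma IsChain.dist_le (hp : IsChain lev p) (j t : ℕ) :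
    dist (p j) (p (j + 2 * t)) ≤ scale (lev (p (j + 1)) + 2) := by
  suffices h : ∀ j, dist (p j) (p (j + 2 * t)) ≤
      2 * scale (lev (p (j + 1)) + 3) - 2 * scale (lev (p (j + 2 * t + 1)) + 3) by
    have hhalf : scale (lev (p (j + 1)) + 2 + 1) = scale (lev (p (j + 1)) + 2) / 2 := by
      rw [scale_add]; norm_num
    linarith [h j, scale_pos (lev (p (j + 2 * t + 1)) + 3)]
  induction t with
  | zero => simp
  | succ t ih =>
    intro j
    have hfar : scale (lev (p (j + 3)) + 3) ≤ scale (lev (p (j + 1)) + 3) / 2 :=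
      (scale_antitone (show lev (p (j + 1)) + 3 + 1 ≤ lev (p (j + 3)) + 3 by
        linarith [hp.lev_lt_succ (j + 1), hp.lev_lt_succ (j + 2)])).trans_eq
        (by rw [scale_add]; norm_num)
    have hnext := ih (j + 2)
    rw [show j + 2 + 2 * t = j + 2 * (t + 1) by ring] at hnext
    linarith [hp.dist_step j, dist_triangle (p j) (p (j + 2)) (p (j + 2 * (t + 1)))]

lemma IsChain.near (hp : IsChain lev p) {j n : ℕ} (t : ℕ) (hn : n = j + 2 * (t + 1)) :
    Near lev (p n) (p j) := by
  subst hn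
  rw [Near, dist_comm]
  exact (hp.dist_le j (t + 1)).trans_lt (scale_strictAnti (by linarith [hp.lev_lt_succ j]))

lemma IsChain.not_near (hp : IsChain lev p) (hsep : LevelSeparated lev) {j n : ℕ} (t : ℕ)
    (hn : n = j + 2 * t) {e : X} (h₁ : lev (p j) < lev e) (h₂ : lev e ≤ lev (p (j + 1))) :
    ¬ Near lev (p n) e := by
  subst hn
  exact not_near_of_lt hsep h₁ ((hp.dist_le j t).trans (scale_antitone (by omega)))

/-- `dist (p (2k+1)) (p (2k+2))` is comparable to `dist (p 0) (p 1)`, which lies between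
`scale (lev (p 1))` and `scale (lev (p 0) + 3)`. -/
lemma IsChain.cutoff_mem (hp : IsChain lev p) (hsep : LevelSeparated lev) (k : ℕ) :
    lev (p 0) < cutoff (p (2 * k + 1)) (p (2 * k + 2)) ∧
      cutoff (p (2 * k + 1)) (p (2 * k + 2)) ≤ lev (p 1) := by
  set x := p (2 * k + 1)
  set y := p (2 * k + 2)
  have h01 : lev (p 0) < lev (p 1) := hp.lev_lt_succ 0
  have hx : dist (p 1) x ≤ scale (lev (p 1)) / 8 := by
    have h := hp.dist_le 1 k
    rw [show 1 + 2 * k = 2 * k + 1 by ring] at h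
    refine h.trans ((scale_antitone (show lev (p 1) + 3 ≤ lev (p 2) + 2 by
      linarith [hp.lev_lt_succ 1])).trans_eq ?_)
    rw [scale_add]; norm_num
  have hy : dist (p 0) y ≤ scale (lev (p 1)) / 4 := by
    have h := hp.dist_le 0 (k + 1)
    rw [show 0 + 2 * (k + 1) = 2 * k + 2 by ring] at h
    exact h.trans_eq (by rw [scale_add]; norm_num)
  have hsep01 : scale (lev (p 1)) ≤ dist (p 0) (p 1) := by
    simpa only [max_eq_right h01.le] using hsep (p 0) (p 1) fun h => h01.ne (congrArg lev h)
  have h01' : dist (p 0) (p 1) < scale (lev (p 0)) / 8 :=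
    hp.dist_zero_one.trans_eq (by rw [scale_add]; norm_num)
  have hscale : scale (lev (p 1)) ≤ scale (lev (p 0)) / 2 :=
    (scale_antitone (show lev (p 0) + 1 ≤ lev (p 1) by omega)).trans_eq
      (by rw [scale_add]; norm_num)
  have hlow : scale (lev (p 1)) ≤ 2 * dist x y := by
    linarith [dist_triangle4 (p 0) y x (p 1), dist_comm x y, dist_comm x (p 1),
      scale_pos (lev (p 1))]
  have hhigh : 2 * dist x y < scale (lev (p 0)) := by
    linarith [dist_triangle4 x (p 1) (p 0) y, dist_comm x (p 1), dist_comm (p 0) (p 1),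
      scale_pos (lev (p 0))]
  refine ⟨scale_strictAnti.lt_iff_gt.mp ?_, Nat.sInf_le hlow⟩
  exact (Nat.sInf_mem (⟨_, hlow⟩ : {n | scale n ≤ 2 * dist x y}.Nonempty)).trans_lt hhigh

end Chain

lemma exists_color_eq {X : Type*} [MetricSpace X] {lev : X → ℕ} {Y : Set X}
    (hsep : LevelSeparated lev) (hY : Preperfect Y) (hne : Y.Nonempty) (k : ℕ) :
    ∃ x ∈ Y, ∃ y ∈ Y, x ≠ y ∧ color lev x y = k := by
  obtain ⟨p, hpY, hp⟩ := Preperfect.exists_isChain hY hsep hne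
  have hlt : lev (p (2 * k + 1)) < lev (p (2 * k + 2)) := hp.strictMono (by omega)
  refine ⟨_, hpY _, _, hpY _, fun h => hlt.ne (congrArg lev h), ?_⟩
  obtain ⟨hc₀, hc₁⟩ := hp.cutoff_mem hsep k
  rw [color, if_pos hlt]
  refine transitions_eq (ℓ := lev ∘ p) hp.strictMono hc₀ hc₁
    (fun i hi => ?_) (fun i hi => ?_) (fun i hi m h₁ h₂ => ?_) (fun i hi m h₁ h₂ => ?_)
  · exact ⟨p (2 * i + 1), rfl, hp.near (k - i - 1) (by omega),
      hp.not_near hsep (k + 1 - i) (by omega) (hp.lev_lt_succ _) le_rfl⟩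
  · exact ⟨p (2 * i + 2), rfl, hp.near (k - i - 1) (by omega),
      hp.not_near hsep (k - i) (by omega) (hp.lev_lt_succ _) le_rfl⟩
  · rintro ⟨e, rfl, hnear, -⟩
    exact hp.not_near hsep (k - i) (by omega) h₁ h₂ hnear
  · rintro ⟨e, rfl, hnear, -⟩
    exact hp.not_near hsep (k + 1 - i) (by omega) h₁ h₂ hnear

end

end SigmaDiscrete

theorem stmt_3 {X : Type*} [MetricSpace X]
    (D : ℕ → Set X) (hD : ∀ n, DiscreteTopology (D n)) (hcov : ⋃ n, D n = Set.univ) :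
    ∃ c : X → X → ℕ, (∀ x y, c x y = c y x) ∧
      ∀ Y : Set X, Nonempty (Y ≃ₜ ℚ) →
        ∀ n : ℕ, ∃ x ∈ Y, ∃ y ∈ Y, x ≠ y ∧ c x y = n := by
  obtain ⟨lev, hsep⟩ := SigmaDiscrete.exists_levelSeparated D hD hcov
  refine ⟨SigmaDiscrete.color lev, SigmaDiscrete.color_comm lev, fun Y ⟨e⟩ n => ?_⟩
  exact SigmaDiscrete.exists_color_eq hsep (SigmaDiscrete.preperfect_of_homeomorph e)
    ⟨_, (e.symm 0).2⟩ n
end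

section
/- Every metric space is left-separated if and only if it is σ-discrete. -/
/-- A topological space is left-separated if it carries a well-ordering all of
whose initial segments are closed. -/
def LeftSeparated (X : Type*) [TopologicalSpace X] : Prop :=
  ∃ r : X → X → Prop, IsWellOrder X r ∧ ∀ x : X, IsClosed {y : X | r y x}

/-!
A well-ordering with closed initial segments puts every point at positive distance from its
predecessors; sorting the points by a lower bound `1 / (n + 1)` on that distance splits the space
into countably many uniformly separated, hence discrete, sets. Conversely, each discrete set is a
countable union of uniformly separated sets, which are closed and discrete, so all their subsets
are closed. Well-order the space by first listing the points of the first such set, then those of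
the second, and so on: every initial segment lies in finitely many of these sets and is closed.
-/

open Set Topology

section Topological

variable {X : Type*} [TopologicalSpace X]

lemma isClosed_of_subset_biUnion_discrete_closed {ι : Type*} {C : ι → Set X} {I : Set ι}
    (hI : I.Finite) (hC : ∀ i ∈ I, IsClosed (C i) ∧ IsDiscrete (C i)) {s : Set X}
    (hs : s ⊆ ⋃ i ∈ I, C i) : IsClosed s := by
  rw [← inter_eq_left.2 hs, inter_iUnion₂]
  exact hI.isClosed_biUnion fun i hi ↦
    isClosed_of_subset_discrete_closed inter_subset_right (hC i hi).2 (hC i hi).1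

lemma leftSeparated_of_iUnion_eq_univ {C : ℕ → Set X}
    (hC : ∀ n, IsClosed (C n) ∧ IsDiscrete (C n)) (hcov : ⋃ n, C n = univ) :
    LeftSeparated X := by
  classical
  have hmem (x : X) : ∃ n, x ∈ C n := mem_iUnion.1 (hcov ▸ mem_univ x)
  let index (x : X) : ℕ := Nat.find (hmem x)
  let r := (Prod.Lex (· < ·) WellOrderingRel).onFun fun x ↦ (index x, x)
  have hr : IsWellOrder X r := Function.Injective.isWellOrder _ fun _ _ h ↦ congrArg Prod.snd h
  refine ⟨r, hr, fun x ↦ isClosed_of_subset_biUnion_discrete_closed (finite_Iic (index x))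
    (fun n _ ↦ hC n) fun y hy ↦ mem_iUnion₂.2 ⟨index y, ?_, Nat.find_spec (hmem y)⟩⟩
  rcases Prod.lex_def.1 hy with h | ⟨h, -⟩
  exacts [h.le, h.le]

end Topological

section Metric

open Metric

variable {X : Type*} [MetricSpace X]

lemma Metric.isDiscrete_of_pairwise_le_dist {s : Set X} {ε : ℝ} (hε : 0 < ε)
    (hs : s.Pairwise fun x y ↦ ε ≤ dist x y) : IsDiscrete s := by
  refine isDiscrete_iff_forall_mem_exists_isOpen.2 fun x hx ↦ ⟨ball x ε, isOpen_ball, ?_⟩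
  refine Subset.antisymm (fun y ⟨hyx, hys⟩ ↦ ?_) (singleton_subset_iff.2 ⟨mem_ball_self hε, hx⟩)
  by_contra hne
  exact (hs hys hx hne).not_gt hyx

lemma IsDiscrete.exists_iUnion_pairwise_le_dist {s : Set X} (hs : IsDiscrete s) :
    ∃ C : ℕ → Set X, ⋃ n, C n = s ∧ ∀ n, (C n).Pairwise fun x y ↦ 1 / (n + 1 : ℝ) ≤ dist x y := by
  refine ⟨fun n ↦ {x ∈ s | ∀ y ∈ s, y ≠ x → 1 / (n + 1 : ℝ) ≤ dist x y},
    Subset.antisymm (iUnion_subset fun n ↦ sep_subset _ _) fun x hx ↦ ?_,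
    fun n a ha b hb hab ↦ ha.2 b hb.1 hab.symm⟩
  have hiso : {x} ∈ 𝓝[s] x := by rw [hs.nhdsWithin x hx]; exact Filter.mem_pure.2 rfl
  obtain ⟨ε, hε, hball⟩ := mem_nhdsWithin_iff.1 hiso
  obtain ⟨n, hn⟩ := exists_nat_one_div_lt hε
  refine mem_iUnion.2 ⟨n, hx, fun y hy hyx ↦ ?_⟩
  by_contra! hclose
  exact hyx (hball ⟨mem_ball'.2 (hclose.trans hn), hy⟩)

lemma LeftSeparated.exists_iUnion_pairwise_le_dist (h : LeftSeparated X) :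
    ∃ D : ℕ → Set X, ⋃ n, D n = univ ∧
      ∀ n, (D n).Pairwise fun x y ↦ 1 / (n + 1 : ℝ) ≤ dist x y := by
  obtain ⟨r, hr, hclosed⟩ := h
  refine ⟨fun n ↦ {x | ∀ y, r y x → 1 / (n + 1 : ℝ) ≤ dist x y},
    eq_univ_of_forall fun x ↦ ?_, fun n a ha b hb hab ↦ ?_⟩
  · have hx : x ∉ closure {y | r y x} := by
      rw [(hclosed x).closure_eq]
      exact irrefl_of r x
    rw [Metric.mem_closure_iff] at hx
    push Not at hx
    obtain ⟨ε, hε, hfar⟩ := hx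
    obtain ⟨n, hn⟩ := exists_nat_one_div_lt hε
    exact mem_iUnion.2 ⟨n, fun y hy ↦ hn.le.trans (hfar y hy)⟩
  · rcases trichotomous_of r a b with h | h | h
    · exact dist_comm a b ▸ hb a h
    · exact absurd h hab
    · exact ha b h

end Metric

theorem stmt_4 {X : Type*} [MetricSpace X] :
    LeftSeparated X ↔
      ∃ D : ℕ → Set X, (∀ n, DiscreteTopology (D n)) ∧ ⋃ n, D n = Set.univ := by
  constructor
  · intro h
    obtain ⟨D, hcov, hsep⟩ := h.exists_iUnion_pairwise_le_dist
    exact ⟨D, fun n ↦ (Metric.isDiscrete_of_pairwise_le_dist (by positivity) (hsep n)).to_subtype,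
      hcov⟩
  · rintro ⟨D, hD, hcov⟩
    choose C hCcov hCsep using fun n ↦
      (isDiscrete_iff_discreteTopology.2 (hD n)).exists_iUnion_pairwise_le_dist
    refine leftSeparated_of_iUnion_eq_univ (C := fun m ↦ C m.unpair.1 m.unpair.2)
      (fun m ↦ ⟨Metric.isClosed_of_pairwise_le_dist (by positivity) (hCsep _ _),
        Metric.isDiscrete_of_pairwise_le_dist (by positivity) (hCsep _ _)⟩) ?_
    rw [iUnion_unpair]
    simp_rw [hCcov]
    exact hcov
end

section
/- Let X be a regular topological space with closed neighborhood assignment U_x (x ∈ X) such that for every infinite Y ⊆ X there is y ∈ Y with {x ∈ Y : y ∉ U_x} infinite. Then there is a coloring c : [X]² → {0,1,2} such that: any Y with c''[Y]² = {1} is finite, and any Y with c''[Y]² ⊆ {0} or c''[Y]² ⊆ {2} is discrete. Consequently X does not satisfy X → (ω+1)²₃. -/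
/-!
Well-order `X` and colour a pair `x ≺ y` by `1` if `x ∈ U y`, by `2` if only `y ∈ U x`, and by `0`
otherwise. On a `1`-homogeneous set `Y` a point `y` can only miss `U x` for `x ≺ y`, so the
hypothesis on `U` produces, inside every infinite subset of `Y`, a point with infinitely many
predecessors; this is impossible in a well-order. A `0`-homogeneous set meets `U y` only in `y`.
On a `2`-homogeneous set the points of `U y` other than `y` lie above `y`; if `x₀` is the least of
them, the open set `U y \ U x₀` isolates `y`. Since `ω + 1` is infinite and not discrete, it has no
homogeneous copy.
-/

open Set Filter Topology

theorem WellFounded.finite_of_forall_exists_infinite_rel {α : Type*} {r : α → α → Prop}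
    (hr : WellFounded r) {S : Set α}
    (h : ∀ T ⊆ S, T.Infinite → ∃ t ∈ T, {x ∈ T | r x t}.Infinite) : S.Finite := by
  by_contra hS
  obtain ⟨t, htS, ht⟩ := h S Subset.rfl hS
  obtain ⟨y, ⟨hyS, hy⟩, hmin⟩ := hr.has_min {y ∈ S | {x ∈ S | r x y}.Infinite} ⟨t, htS, ht⟩
  obtain ⟨t, ⟨htS, hty⟩, ht⟩ := h {x ∈ S | r x y} (sep_subset _ _) hy
  exact hmin t ⟨htS, ht.mono fun x hx => ⟨hx.1.1, hx.2⟩⟩ hty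

theorem discreteTopology_of_forall_exists_mem_nhds {X : Type*} [TopologicalSpace X] {Y : Set X}
    (h : ∀ y ∈ Y, ∃ V ∈ 𝓝 y, V ∩ Y ⊆ {y}) : DiscreteTopology Y :=
  isDiscrete_iff_discreteTopology.mp <| IsDiscrete.of_nhdsWithin fun y hy =>
    le_pure_iff.mpr (mem_nhdsWithin_iff_exists_mem_nhds_inter.mpr (h y hy))

theorem OnePoint.not_discreteTopology_nat : ¬ DiscreteTopology (OnePoint ℕ) := fun _ =>
  have : Finite (OnePoint ℕ) := finite_of_compact_of_discrete
  not_finite (OnePoint ℕ)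

section Coloring

variable {X κ : Type*}

def IsMonochromatic (c : X → X → κ) (Y : Set X) (i : κ) : Prop :=
  ∀ x ∈ Y, ∀ y ∈ Y, x ≠ y → c x y = i

theorem exists_isMonochromatic {c : X → X → κ} {Y : Set X} (hY : Y.Nontrivial)
    (h : ∀ x ∈ Y, ∀ y ∈ Y, ∀ x' ∈ Y, ∀ y' ∈ Y, x ≠ y → x' ≠ y' → c x y = c x' y') :
    ∃ i, IsMonochromatic c Y i := by
  obtain ⟨a, ha, b, hb, hab⟩ := hY
  exact ⟨c a b, fun x hx y hy hxy => h x hx y hy a ha b hb hxy hab⟩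

open Classical in
/-- The paper's `c(x, y)` for `x <_wo y`. -/
noncomputable def orderedPairColor (U : X → Set X) (x y : X) : Fin 3 :=
  if x ∈ U y then 1 else if y ∈ U x then 2 else 0

open Classical in
noncomputable def neighborhoodColoring (r : X → X → Prop) (U : X → Set X) (x y : X) : Fin 3 :=
  if r x y then orderedPairColor U x y else orderedPairColor U y x

variable {r : X → X → Prop} {U : X → Set X} {x y : X}

theorem neighborhoodColoring_of_rel (h : r x y) :
    neighborhoodColoring r U x y = orderedPairColor U x y := by
  simp [neighborhoodColoring, h]

theorem neighborhoodColoring_symm [IsStrictTotalOrder X r] (x y : X) :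
    neighborhoodColoring r U x y = neighborhoodColoring r U y x := by
  rcases trichotomous_of r x y with h | rfl | h
  · rw [neighborhoodColoring_of_rel h, neighborhoodColoring, if_neg (asymm h)]
  · rfl
  · rw [neighborhoodColoring_of_rel h, neighborhoodColoring, if_neg (asymm h)]

theorem neighborhoodColoring_eq_one_iff_of_rel (h : r x y) :
    neighborhoodColoring r U x y = 1 ↔ x ∈ U y := by
  rw [neighborhoodColoring_of_rel h, orderedPairColor]
  split_ifs <;> simp_all

theorem neighborhoodColoring_eq_two_iff_of_rel (h : r x y) :
    neighborhoodColoring r U x y = 2 ↔ x ∉ U y ∧ y ∈ U x := by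
  rw [neighborhoodColoring_of_rel h, orderedPairColor]
  split_ifs <;> simp_all

theorem neighborhoodColoring_eq_zero_iff :
    neighborhoodColoring r U x y = 0 ↔ x ∉ U y ∧ y ∉ U x := by
  unfold neighborhoodColoring orderedPairColor
  split_ifs <;> simp_all

variable {Y : Set X}

theorem IsMonochromatic.finite_of_eq_one [IsWellOrder X r] (hU : ∀ x, x ∈ U x)
    (hbig : ∀ Y : Set X, Y.Infinite → ∃ y ∈ Y, {x ∈ Y | y ∉ U x}.Infinite)
    (hY : IsMonochromatic (neighborhoodColoring r U) Y 1) : Y.Finite := by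
  refine (IsWellFounded.wf (r := r)).finite_of_forall_exists_infinite_rel fun T hTY hT => ?_
  obtain ⟨t, htT, ht⟩ := hbig T hT
  refine ⟨t, htT, ht.mono fun x hx => ⟨hx.1, ?_⟩⟩
  obtain ⟨hxT, hxU⟩ := hx
  rcases trichotomous_of r x t with h | rfl | h
  · exact h
  · exact absurd (hU x) hxU
  · have := hY t (hTY htT) x (hTY hxT) (ne_of_irrefl h)
    exact absurd ((neighborhoodColoring_eq_one_iff_of_rel h).mp this) hxU

variable [TopologicalSpace X]

theorem IsMonochromatic.discreteTopology_of_eq_zero (hU : ∀ x, U x ∈ 𝓝 x)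
    (hY : IsMonochromatic (neighborhoodColoring r U) Y 0) : DiscreteTopology Y := by
  refine discreteTopology_of_forall_exists_mem_nhds fun y hy => ⟨U y, hU y, ?_⟩
  rintro x ⟨hxU, hxY⟩
  by_contra hne
  exact (neighborhoodColoring_eq_zero_iff.mp (hY x hxY y hy hne)).1 hxU

theorem IsMonochromatic.discreteTopology_of_eq_two [IsWellOrder X r] (hU : ∀ x, U x ∈ 𝓝 x)
    (hUc : ∀ x, IsClosed (U x)) (hY : IsMonochromatic (neighborhoodColoring r U) Y 2) :
    DiscreteTopology Y := by
  refine discreteTopology_of_forall_exists_mem_nhds fun y hy => ?_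
  set S := (Y ∩ U y) \ {y}
  have habove : ∀ x ∈ S, r y x := by
    rintro x ⟨⟨hxY, hxU⟩, hne⟩
    rcases trichotomous_of r x y with h | rfl | h
    · exact absurd hxU ((neighborhoodColoring_eq_two_iff_of_rel h).mp (hY x hxY y hy hne)).1
    · exact absurd rfl hne
    · exact h
  rcases S.eq_empty_or_nonempty with hS | hS
  · exact ⟨U y, hU y, fun x ⟨hxU, hxY⟩ => by_contra fun hne => hS.subset ⟨⟨hxY, hxU⟩, hne⟩⟩
  obtain ⟨x₀, hx₀S, hmin⟩ := (IsWellFounded.wf (r := r)).has_min S hS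
  have hyx₀ : y ∉ U x₀ := ((neighborhoodColoring_eq_two_iff_of_rel (habove x₀ hx₀S)).mp
    (hY y hy x₀ hx₀S.1.1 (Ne.symm hx₀S.2))).1
  refine ⟨U y ∩ (U x₀)ᶜ, inter_mem (hU y) ((hUc x₀).isOpen_compl.mem_nhds hyx₀), ?_⟩
  rintro x ⟨⟨hxUy, hxU₀⟩, hxY⟩
  by_contra hne
  have hx₀x : r x₀ x := by
    rcases trichotomous_of r x₀ x with h | rfl | h
    · exact h
    · exact absurd (mem_of_mem_nhds (hU x₀)) hxU₀
    · exact absurd h (hmin x ⟨⟨hxY, hxUy⟩, hne⟩)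
  exact hxU₀ ((neighborhoodColoring_eq_two_iff_of_rel hx₀x).mp
    (hY x₀ hx₀S.1.1 x hxY (ne_of_irrefl hx₀x))).2

end Coloring

theorem stmt_6_general {X : Type*} [TopologicalSpace X]
    (U : X → Set X) (hU : ∀ x : X, U x ∈ nhds x ∧ IsClosed (U x))
    (hbig : ∀ Y : Set X, Y.Infinite → ∃ y ∈ Y, {x ∈ Y | y ∉ U x}.Infinite) :
    (∃ c : X → X → Fin 3, (∀ x y, c x y = c y x) ∧
      (∀ Y : Set X,
        (∀ x ∈ Y, ∀ y ∈ Y, x ≠ y → c x y = 1) → Y.Finite) ∧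
      (∀ Y : Set X,
        (∀ x ∈ Y, ∀ y ∈ Y, x ≠ y → c x y = 0) → DiscreteTopology Y) ∧
      (∀ Y : Set X,
        (∀ x ∈ Y, ∀ y ∈ Y, x ≠ y → c x y = 2) → DiscreteTopology Y)) ∧
    ¬ (∀ c : X → X → Fin 3, (∀ x y, c x y = c y x) →
        ∃ Y : Set X, Nonempty (Y ≃ₜ OnePoint ℕ) ∧
          ∀ x ∈ Y, ∀ y ∈ Y, ∀ x' ∈ Y, ∀ y' ∈ Y, x ≠ y → x' ≠ y' → c x y = c x' y') := by
  obtain ⟨r, _⟩ : ∃ r : X → X → Prop, IsWellOrder X r := ⟨_, WellOrderingRel.isWellOrder⟩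
  have hnhds x := (hU x).1
  have h1 (Y : Set X) (hY : IsMonochromatic (neighborhoodColoring r U) Y 1) : Y.Finite :=
    hY.finite_of_eq_one (fun x => mem_of_mem_nhds (hnhds x)) hbig
  have h0 (Y : Set X) (hY : IsMonochromatic (neighborhoodColoring r U) Y 0) :
      DiscreteTopology Y := hY.discreteTopology_of_eq_zero hnhds
  have h2 (Y : Set X) (hY : IsMonochromatic (neighborhoodColoring r U) Y 2) :
      DiscreteTopology Y := hY.discreteTopology_of_eq_two hnhds fun x => (hU x).2
  refine ⟨⟨_, neighborhoodColoring_symm (r := r), h1, h0, h2⟩, fun hpart => ?_⟩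
  obtain ⟨Y, ⟨e⟩, hY⟩ := hpart _ (neighborhoodColoring_symm (r := r))
  have hinf : Y.Infinite := infinite_coe_iff.mp (.of_injective _ e.symm.injective)
  have hnd : ¬ DiscreteTopology Y := fun _ =>
    OnePoint.not_discreteTopology_nat e.symm.isEmbedding.discreteTopology
  obtain ⟨i, hi⟩ := exists_isMonochromatic hinf.nontrivial hY
  fin_cases i
  · exact hnd (h0 Y hi)
  · exact hinf (h1 Y hi)
  · exact hnd (h2 Y hi)

theorem stmt_6 {X : Type*} [TopologicalSpace X] [RegularSpace X]
    (U : X → Set X) (hU : ∀ x : X, U x ∈ nhds x ∧ IsClosed (U x))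
    (hbig : ∀ Y : Set X, Y.Infinite → ∃ y ∈ Y, {x ∈ Y | y ∉ U x}.Infinite) :
    (∃ c : X → X → Fin 3, (∀ x y, c x y = c y x) ∧
      (∀ Y : Set X,
        (∀ x ∈ Y, ∀ y ∈ Y, x ≠ y → c x y = 1) → Y.Finite) ∧
      (∀ Y : Set X,
        (∀ x ∈ Y, ∀ y ∈ Y, x ≠ y → c x y = 0) → DiscreteTopology Y) ∧
      (∀ Y : Set X,
        (∀ x ∈ Y, ∀ y ∈ Y, x ≠ y → c x y = 2) → DiscreteTopology Y)) ∧
    ¬ (∀ c : X → X → Fin 3, (∀ x y, c x y = c y x) →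
        ∃ Y : Set X, Nonempty (Y ≃ₜ OnePoint ℕ) ∧
          ∀ x ∈ Y, ∀ y ∈ Y, ∀ x' ∈ Y, ∀ y' ∈ Y, x ≠ y → x' ≠ y' → c x y = c x' y') :=
  stmt_6_general U hU hbig
end

section
/- Let A and B be nonempty sets with A ⊆ B. If S ⊆ [A]^{<ℵ₁} is stationary in [A]^{<ℵ₁}, then the lift S↑B = {M ∈ [B]^{<ℵ₁} : M ∩ A ∈ S} is stationary in [B]^{<ℵ₁}. -/
/-! Fix a club `C` in `[B]^{<ℵ₁}`. Choosing members of `C` over finite sets, monotonically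
in the finite set, gives `F : Finset γ → Set γ` such that every countable `K ⊆ B` closed under
`F` is a countable directed union of values of `F`, hence lies in `C`. Closure `cl` under `F`
is finitary, so the countable `N ⊆ A` with `cl e ∩ A ⊆ N` for all finite `e ⊆ N` form a club
in `[A]^{<ℵ₁}`. A member `N` of this club lying in `S` gives `cl N ∈ C` with
`cl N ∩ A = N ∈ S`. -/

/-- `smallSubsets A` is `[A]^{<ℵ₁}`, the collection of countable subsets of `A`. -/
def smallSubsets {γ : Type*} (A : Set γ) : Set (Set γ) :=
  {M | M ⊆ A ∧ M.Countable}

/-- `C` is a club in `[A]^{<ℵ₁}`: a family of countable subsets of `A` that is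
cofinal and closed under unions of countable increasing chains. -/
def IsClubIn {γ : Type*} (A : Set γ) (C : Set (Set γ)) : Prop :=
  C ⊆ smallSubsets A ∧
  (∀ N ∈ smallSubsets A, ∃ M ∈ C, N ⊆ M) ∧
  (∀ D : Set (Set γ), D ⊆ C → D.Nonempty → D.Countable → IsChain (· ⊆ ·) D →
    ⋃₀ D ∈ C)

/-- `S` is stationary in `[A]^{<ℵ₁}`: a family of countable subsets of `A`
meeting every club in `[A]^{<ℵ₁}`. -/
def IsStationaryIn {γ : Type*} (A : Set γ) (S : Set (Set γ)) : Prop :=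
  S ⊆ smallSubsets A ∧ ∀ C : Set (Set γ), IsClubIn A C → (S ∩ C).Nonempty

section

open Set

variable {γ : Type*}

lemma countable_setOf_finset_subset {s : Set γ} (hs : s.Countable) :
    {e : Finset γ | ↑e ⊆ s}.Countable :=
  ((countable_ofPred_finite_subset hs).preimage Finset.coe_injective).mono
    fun e he => show _ ∧ _ from ⟨e.finite_toSet, he⟩

section FinitaryClosure

variable (G : Finset γ → Set γ)

def closureStep (X : Set γ) : Set γ :=
  X ∪ ⋃ e ∈ {e : Finset γ | ↑e ⊆ X}, G e

def finitaryClosure (Y : Set γ) : Set γ :=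
  ⋃ n, (closureStep G)^[n] Y

variable {G}

lemma monotone_iterate_closureStep (Y : Set γ) :
    Monotone fun n => (closureStep G)^[n] Y :=
  monotone_nat_of_le_succ fun n => by
    rw [Function.iterate_succ_apply']
    exact subset_union_left

lemma subset_finitaryClosure (Y : Set γ) : Y ⊆ finitaryClosure G Y :=
  subset_iUnion (fun n => (closureStep G)^[n] Y) 0

lemma finitaryClosure_closed {Y : Set γ} {e : Finset γ} (he : ↑e ⊆ finitaryClosure G Y) :
    G e ⊆ finitaryClosure G Y := by
  obtain ⟨n, hn⟩ :=
    (monotone_iterate_closureStep Y).directed_le.exists_mem_subset_of_finset_subset_biUnion he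
  calc G e ⊆ closureStep G ((closureStep G)^[n] Y) :=
        (subset_biUnion_of_mem (u := G) hn).trans subset_union_right
    _ = (closureStep G)^[n + 1] Y := (Function.iterate_succ_apply' _ _ _).symm
    _ ⊆ finitaryClosure G Y := subset_iUnion (fun n => (closureStep G)^[n] Y) (n + 1)

lemma finitaryClosure_subset {Y X : Set γ} (hYX : Y ⊆ X)
    (hX : ∀ e : Finset γ, ↑e ⊆ X → G e ⊆ X) : finitaryClosure G Y ⊆ X := by
  refine iUnion_subset fun n => ?_
  induction n with
  | zero => exact hYX
  | succ n ih =>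
    rw [Function.iterate_succ_apply']
    exact union_subset ih (iUnion₂_subset fun e he => hX e (Subset.trans he ih))

lemma finitaryClosure_mono : Monotone (finitaryClosure G) := fun _ Y' hY =>
  finitaryClosure_subset (hY.trans (subset_finitaryClosure Y')) fun _ => finitaryClosure_closed

lemma Set.Countable.finitaryClosure {Y : Set γ} (hY : Y.Countable)
    (hG : ∀ e, (G e).Countable) : (finitaryClosure G Y).Countable := by
  refine countable_iUnion fun n => ?_
  induction n with
  | zero => exact hY
  | succ n ih =>
    rw [Function.iterate_succ_apply']
    exact ih.union ((countable_setOf_finset_subset ih).biUnion fun e _ => hG e)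

lemma finitaryClosure_subset_biUnion_finset (Y : Set γ) :
    finitaryClosure G Y ⊆ ⋃ e ∈ {e : Finset γ | ↑e ⊆ Y}, finitaryClosure G ↑e := by
  classical
  refine finitaryClosure_subset (fun y hy => mem_biUnion (x := {y}) (by simpa using hy)
    (subset_finitaryClosure _ (by simp))) fun d hd => ?_
  have hdir : DirectedOn (fun i j : Finset γ => finitaryClosure G ↑i ⊆ finitaryClosure G ↑j)
      {e : Finset γ | ↑e ⊆ Y} := fun i hi j hj =>
    ⟨i ∪ j, by simpa using union_subset hi hj,
      finitaryClosure_mono (by simp), finitaryClosure_mono (by simp)⟩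
  obtain ⟨e, he, hde⟩ := hdir.exists_mem_subset_of_finset_subset_biUnion ⟨∅, by simp⟩ hd
  exact (finitaryClosure_closed hde).trans (subset_biUnion_of_mem (u := fun e : Finset γ =>
    finitaryClosure G ↑e) he)

lemma isClubIn_setOf_closed {A : Set γ} (hGA : ∀ e, G e ⊆ A) (hGc : ∀ e, (G e).Countable) :
    IsClubIn A {N | N ∈ smallSubsets A ∧ ∀ e : Finset γ, ↑e ⊆ N → G e ⊆ N} := by
  refine ⟨fun N hN => hN.1, fun N hN => ?_, fun D hDC hne hcount hchain => ?_⟩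
  · exact ⟨finitaryClosure G N, ⟨⟨finitaryClosure_subset hN.1 fun e _ => hGA e,
      hN.2.finitaryClosure hGc⟩, fun _ => finitaryClosure_closed⟩, subset_finitaryClosure N⟩
  refine ⟨⟨sUnion_subset fun N hN => (hDC hN).1.1,
    hcount.sUnion fun N hN => (hDC hN).1.2⟩, fun e he => ?_⟩
  obtain ⟨N, hN, heN⟩ :=
    hchain.directedOn.exists_mem_subset_of_finite_of_subset_sUnion hne e.finite_toSet he
  exact ((hDC hN).2 e heN).trans (subset_sUnion_of_mem hN)

end FinitaryClosure

section ClubChoice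

variable {B : Set γ} {C : Set (Set γ)}

lemma IsClubIn.iUnion_mem {ι : Type*} [Countable ι] [Nonempty ι] (hC : IsClubIn B C)
    {f : ι → Set γ} (hf : Directed (· ⊆ ·) f) (hfC : ∀ i, f i ∈ C) : ⋃ i, f i ∈ C := by
  have := Encodable.ofCountable ι
  inhabit ι
  have hunion : ⋃₀ range (f ∘ hf.sequence f) = ⋃ i, f i :=
    (sUnion_range _).trans <| Subset.antisymm (iUnion_subset fun n => subset_iUnion f _)
      (iUnion_subset fun i =>
        (hf.le_sequence i).trans (subset_iUnion (f ∘ hf.sequence f) _))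
  rw [← hunion]
  exact hC.2.2 _ (range_subset_iff.2 fun n => hfC _) (range_nonempty _) (countable_range _)
    hf.sequence_mono.isChain_range

variable (B C) in
noncomputable def clubAbove (X : Set γ) : Set γ :=
  Classical.epsilon fun M => M ∈ C ∧ X ∩ B ⊆ M

lemma IsClubIn.clubAbove_spec (hC : IsClubIn B C) {X : Set γ} (hX : (X ∩ B).Countable) :
    clubAbove B C X ∈ C ∧ X ∩ B ⊆ clubAbove B C X :=
  Classical.epsilon_spec (hC.2.1 _ ⟨inter_subset_right, hX⟩)

variable (B C) in
noncomputable def clubChoice (e : Finset γ) : Set γ :=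
  clubAbove B C (↑e ∪ ⋃ e' ∈ {e' : Finset γ | e' ⊂ e}, clubChoice e')
termination_by e.card
decreasing_by exact Finset.card_lt_card ‹_›

lemma IsClubIn.clubChoice_spec (hC : IsClubIn B C) (e : Finset γ) :
    clubChoice B C e ∈ C ∧ ↑e ∩ B ⊆ clubChoice B C e ∧
      ∀ e' ⊂ e, clubChoice B C e' ⊆ clubChoice B C e := by
  induction e using Finset.strongInduction with
  | H e ih =>
    set Y := (↑e : Set γ) ∪ ⋃ e' ∈ {e' : Finset γ | e' ⊂ e}, clubChoice B C e'
    have hssubsets : {e' : Finset γ | e' ⊂ e}.Countable :=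
      (e.powerset.finite_toSet.subset fun _ he' => Finset.mem_powerset.2 he'.subset).countable
    have hY : (Y ∩ B).Countable :=
      (e.finite_toSet.countable.union (hssubsets.biUnion
        fun e' he' => (hC.1 (ih e' he').1).2)).mono inter_subset_left
    have hchoice : clubChoice B C e = clubAbove B C Y := by rw [clubChoice]
    obtain ⟨hmem, hsub⟩ := hC.clubAbove_spec hY
    rw [hchoice]
    refine ⟨hmem, fun x hx => hsub ⟨Or.inl hx.1, hx.2⟩, fun e' he' x hx => hsub ⟨?_, ?_⟩⟩
    · exact Or.inr (mem_biUnion (show e' ∈ {e' : Finset γ | e' ⊂ e} from he') hx)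
    · exact (hC.1 (ih e' he').1).1 hx

lemma IsClubIn.clubChoice_mem (hC : IsClubIn B C) (e : Finset γ) : clubChoice B C e ∈ C :=
  (hC.clubChoice_spec e).1

lemma IsClubIn.inter_subset_clubChoice (hC : IsClubIn B C) (e : Finset γ) :
    ↑e ∩ B ⊆ clubChoice B C e :=
  (hC.clubChoice_spec e).2.1

lemma IsClubIn.monotone_clubChoice (hC : IsClubIn B C) : Monotone (clubChoice B C) :=
  fun e' e he' => (eq_or_ssubset_of_subset he').elim (fun h => h ▸ subset_rfl)
    ((hC.clubChoice_spec e).2.2 e')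

lemma IsClubIn.countable_clubChoice (hC : IsClubIn B C) (e : Finset γ) :
    (clubChoice B C e).Countable :=
  (hC.1 (hC.clubChoice_mem e)).2

lemma IsClubIn.finitaryClosure_clubChoice_mem (hC : IsClubIn B C) {Y : Set γ} (hYB : Y ⊆ B)
    (hY : Y.Countable) : finitaryClosure (clubChoice B C) Y ∈ C := by
  set K := finitaryClosure (clubChoice B C) Y
  have hKB : K ⊆ B := finitaryClosure_subset hYB fun e _ => (hC.1 (hC.clubChoice_mem e)).1
  have hK : K = ⋃ e : {e : Finset γ // ↑e ⊆ K}, clubChoice B C e := by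
    refine Subset.antisymm (fun x hx => mem_iUnion.2 ⟨⟨{x}, by simpa using hx⟩, ?_⟩)
      (iUnion_subset fun e => finitaryClosure_closed e.2)
    exact hC.inter_subset_clubChoice {x} ⟨by simp, hKB hx⟩
  have : Countable {e : Finset γ // ↑e ⊆ K} :=
    (countable_setOf_finset_subset (hY.finitaryClosure hC.countable_clubChoice)).to_subtype
  have : Nonempty {e : Finset γ // ↑e ⊆ K} := ⟨⟨∅, by simp⟩⟩
  classical
  rw [hK]
  refine hC.iUnion_mem (fun e e' =>
    ⟨⟨e ∪ e', by simpa using union_subset e.2 e'.2⟩, ?_, ?_⟩) fun e => hC.clubChoice_mem e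
  · exact hC.monotone_clubChoice Finset.subset_union_left
  · exact hC.monotone_clubChoice Finset.subset_union_right

end ClubChoice

end

theorem stmt_8_general {γ : Type*} (A B : Set γ)
    (hAB : A ⊆ B) (S : Set (Set γ)) (hS : IsStationaryIn A S) :
    IsStationaryIn B {M | M ∈ smallSubsets B ∧ M ∩ A ∈ S} := by
  refine ⟨fun M hM => hM.1, fun C hC => ?_⟩
  set cl := finitaryClosure (clubChoice B C)
  have hcl : ∀ Y : Set γ, Y.Countable → (cl Y).Countable := fun Y hY =>
    hY.finitaryClosure hC.countable_clubChoice
  obtain ⟨N, hNS, ⟨hNA, hN⟩, hNcl⟩ := hS.2 _ (isClubIn_setOf_closed (A := A)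
    (G := fun e => cl ↑e ∩ A) (fun _ => Set.inter_subset_right)
    fun e => (hcl _ e.finite_toSet.countable).mono Set.inter_subset_left)
  have hMC : cl N ∈ C := hC.finitaryClosure_clubChoice_mem (hNA.trans hAB) hN
  have hMA : cl N ∩ A = N := by
    refine Set.Subset.antisymm (fun x ⟨hx, hxA⟩ => ?_)
      (Set.subset_inter (subset_finitaryClosure N) hNA)
    obtain ⟨e, he, hxe⟩ := Set.mem_iUnion₂.1 (finitaryClosure_subset_biUnion_finset N hx)
    exact hNcl e he ⟨hxe, hxA⟩
  exact ⟨cl N, ⟨hC.1 hMC, by rwa [hMA]⟩, hMC⟩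

theorem stmt_8 {γ : Type*} (A B : Set γ) (hA : A.Nonempty) (hB : B.Nonempty)
    (hAB : A ⊆ B) (S : Set (Set γ)) (hS : IsStationaryIn A S) :
    IsStationaryIn B {M | M ∈ smallSubsets B ∧ M ∩ A ∈ S} :=
  stmt_8_general A B hAB S hS
end

section
/- Let X be a regular topological space with a point-countable base 𝓑, and suppose {N ∈ [X]^{<ℵ₁} : closure(N) \ N ≠ ∅} is stationary in [X]^{<ℵ₁}. Fix F choosing F(N) ∈ closure(N) \ N. Then for every stationary S ⊆ {N ∈ [X]^{<ℵ₁} : closure(N) \ N ≠ ∅} and every n ∈ ω (with U_{x,n} an enumeration of basic neighborhoods of x), there exists a basic open set U such that {N ∈ S : U = U_{F(N),n}} is stationary in [X]^{<ℵ₁}. -/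
section Club

variable {γ : Type*} {A : Set γ}

theorem IsChain.sUnion_sep_superset {D : Set (Set γ)} (hD : IsChain (· ⊆ ·) D)
    {N₀ : Set γ} (hN₀ : N₀ ∈ D) : ⋃₀ {N ∈ D | N₀ ⊆ N} = ⋃₀ D := by
  refine (Set.sUnion_subset_sUnion fun N hN => hN.1).antisymm ?_
  rintro x ⟨N, hN, hxN⟩
  by_cases h : N = N₀
  · exact ⟨N₀, ⟨hN₀, subset_rfl⟩, h ▸ hxN⟩
  rcases hD hN hN₀ h with hle | hge
  · exact ⟨N₀, ⟨hN₀, subset_rfl⟩, hle hxN⟩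
  · exact ⟨N, ⟨hN, hge⟩, hxN⟩

theorem IsClubIn.iUnion_mem_s12 {C : Set (Set γ)} (hC : IsClubIn A C) {M : ℕ → Set γ}
    (hM : Monotone M) (hfreq : ∀ i, ∃ j ≥ i, M j ∈ C) : ⋃ i, M i ∈ C := by
  obtain ⟨j₀, -, hj₀⟩ := hfreq 0
  have hunion : ⋃₀ (M '' {j | M j ∈ C}) = ⋃ i, M i := by
    refine (Set.sUnion_subset ?_).antisymm (Set.iUnion_subset fun i x hx => ?_)
    · rintro _ ⟨j, -, rfl⟩
      exact Set.subset_iUnion M j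
    · obtain ⟨j, hij, hj⟩ := hfreq i
      exact ⟨M j, ⟨j, hj, rfl⟩, hM hij hx⟩
  rw [← hunion]
  refine hC.2.2 _ ?_ ⟨M j₀, j₀, hj₀, rfl⟩ ((Set.to_countable _).image M) ?_
  · rintro _ ⟨j, hj, rfl⟩
    exact hj
  rintro _ ⟨a, -, rfl⟩ _ ⟨b, -, rfl⟩ -
  exact (le_total a b).imp (fun h => hM h) (fun h => hM h)

theorem smallSubsets_isClubIn : IsClubIn A (smallSubsets A) :=
  ⟨subset_rfl, fun N hN => ⟨N, hN, subset_rfl⟩, fun _ hD _ hcnt _ =>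
    ⟨Set.sUnion_subset fun _ hN => (hD hN).1, hcnt.sUnion fun _ hN => (hD hN).2⟩⟩

theorem exists_monotone_seq_smallSubsets {R : ℕ → Set γ → Set γ → Prop}
    (hR : ∀ i, ∀ P ∈ smallSubsets A, ∃ Q ∈ smallSubsets A, P ⊆ Q ∧ R i P Q)
    {N : Set γ} (hN : N ∈ smallSubsets A) :
    ∃ M : ℕ → Set γ, Monotone M ∧ M 0 = N ∧ (∀ i, M i ∈ smallSubsets A) ∧
      ∀ i, R i (M i) (M (i + 1)) := by
  have hext : ∀ i (P : smallSubsets A), ∃ Q : smallSubsets A, P.1 ⊆ Q.1 ∧ R i P.1 Q.1 := by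
    intro i P
    obtain ⟨Q, hQ, hPQ, hRPQ⟩ := hR i P.1 P.2
    exact ⟨⟨Q, hQ⟩, hPQ, hRPQ⟩
  choose step hstep using hext
  let M : ℕ → smallSubsets A := fun i => Nat.rec ⟨N, hN⟩ (fun i P => step i P) i
  exact ⟨fun i => (M i).1, monotone_nat_of_le_succ fun i => (hstep i (M i)).1, rfl,
    fun i => (M i).2, fun i => (hstep i (M i)).2⟩

theorem IsClubIn.iInter_nat {C : ℕ → Set (Set γ)} (hC : ∀ k, IsClubIn A (C k)) :
    IsClubIn A (⋂ k, C k) := by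
  refine ⟨(Set.iInter_subset C 0).trans (hC 0).1, fun N hN => ?_, fun D hD hne hcnt hchain =>
    Set.mem_iInter.2 fun k => (hC k).2.2 D (hD.trans (Set.iInter_subset C k)) hne hcnt hchain⟩
  -- stage `i` of the construction serves the club `C (Nat.unpair i).1`
  obtain ⟨M, hM, hM0, -, hMC⟩ := exists_monotone_seq_smallSubsets
    (R := fun i _ Q => Q ∈ C (Nat.unpair i).1)
    (fun i P hP => (hC (Nat.unpair i).1).2.1 P hP |>.imp fun Q hQ => ⟨(hC _).1 hQ.1, hQ.2, hQ.1⟩)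
    hN
  refine ⟨⋃ i, M i, Set.mem_iInter.2 fun k => (hC k).iUnion_mem_s12 hM fun i => ?_,
    hM0 ▸ Set.subset_iUnion M 0⟩
  refine ⟨Nat.pair k i + 1, (Nat.right_le_pair k i).trans (Nat.le_succ _), ?_⟩
  simpa only [Nat.unpair_pair] using hMC (Nat.pair k i)

theorem IsClubIn.iInter {ι : Type*} [Countable ι] [Nonempty ι] {C : ι → Set (Set γ)}
    (hC : ∀ i, IsClubIn A (C i)) : IsClubIn A (⋂ i, C i) := by
  obtain ⟨e, he⟩ := exists_surjective_nat ι
  rw [← he.iInter_comp]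
  exact IsClubIn.iInter_nat fun k => hC (e k)

def diagInter (A : Set γ) (C : γ → Set (Set γ)) : Set (Set γ) :=
  {N ∈ smallSubsets A | ∀ x ∈ N, N ∈ C x}

theorem IsClubIn.diagInter {C : γ → Set (Set γ)} (hC : ∀ x, IsClubIn A (C x)) :
    IsClubIn A (diagInter A C) := by
  refine ⟨fun N hN => hN.1, fun N hN => ?_, fun D hD hne hcnt hchain => ?_⟩
  · have hstep : ∀ P ∈ smallSubsets A, ∃ Q ∈ smallSubsets A, P ⊆ Q ∧ ∀ x ∈ P, Q ∈ C x := by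
      intro P hP
      have : Countable P := hP.2.to_subtype
      rcases isEmpty_or_nonempty P with hP₀ | hP₀
      · exact ⟨P, hP, subset_rfl, fun x hx => (hP₀.false ⟨x, hx⟩).elim⟩
      obtain ⟨Q, hQ, hPQ⟩ := (IsClubIn.iInter fun x : P => hC x).2.1 P hP
      exact ⟨Q, (hC _).1 (Set.mem_iInter.1 hQ (Classical.arbitrary P)), hPQ,
        fun x hx => Set.mem_iInter.1 hQ ⟨x, hx⟩⟩
    obtain ⟨M, hM, hM0, hMsmall, hMC⟩ :=
      exists_monotone_seq_smallSubsets (R := fun _ P Q => ∀ x ∈ P, Q ∈ C x) (fun _ => hstep) hN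
    refine ⟨⋃ i, M i, ⟨smallSubsets_isClubIn.iUnion_mem_s12 hM fun i => ⟨i, le_rfl, hMsmall i⟩,
      fun x hx => ?_⟩, hM0 ▸ Set.subset_iUnion M 0⟩
    obtain ⟨i, hxi⟩ := Set.mem_iUnion.1 hx
    exact (hC x).iUnion_mem_s12 hM fun j =>
      ⟨max i j + 1, (le_max_right i j).trans (Nat.le_succ _), hMC _ x (hM (le_max_left i j) hxi)⟩
  · refine ⟨smallSubsets_isClubIn.2.2 D (fun N hN => (hD hN).1) hne hcnt hchain, ?_⟩
    rintro x ⟨N₀, hN₀, hxN₀⟩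
    -- the members of the chain above `N₀` all contain `x`, and they have the same union
    rw [← hchain.sUnion_sep_superset hN₀]
    exact (hC x).2.2 _ (fun N hN => (hD hN.1).2 x (hN.2 hxN₀)) ⟨N₀, hN₀, subset_rfl⟩
      (hcnt.mono fun _ hN => hN.1) (hchain.mono fun _ hN => hN.1)

theorem IsStationaryIn.nonempty {S : Set (Set γ)} (hS : IsStationaryIn A S) : S.Nonempty :=
  (hS.2 _ smallSubsets_isClubIn).mono Set.inter_subset_left

theorem IsStationaryIn.mono {S T : Set (Set γ)} (hS : IsStationaryIn A S) (hST : S ⊆ T)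
    (hT : T ⊆ smallSubsets A) : IsStationaryIn A T :=
  ⟨hT, fun C hC => (hS.2 C hC).mono (Set.inter_subset_inter_left C hST)⟩

theorem exists_isClubIn_disjoint_of_not_isStationaryIn {S : Set (Set γ)}
    (hS : S ⊆ smallSubsets A) (h : ¬ IsStationaryIn A S) :
    ∃ C, IsClubIn A C ∧ Disjoint S C := by
  simp only [IsStationaryIn, hS, true_and, not_forall, Set.not_nonempty_iff_eq_empty] at h
  obtain ⟨C, hC, hSC⟩ := h
  exact ⟨C, hC, Set.disjoint_iff_inter_eq_empty.2 hSC⟩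

theorem IsStationaryIn.pressing_down {S : Set (Set γ)} (hS : IsStationaryIn A S)
    {P : Set γ → γ → Prop} (hP : ∀ N ∈ S, ∃ x ∈ N, P N x) :
    ∃ x, IsStationaryIn A {N ∈ S | P N x} := by
  by_contra! h
  choose C hC hSC using fun x => exists_isClubIn_disjoint_of_not_isStationaryIn
    (fun N hN => hS.1 hN.1) (h x)
  obtain ⟨N, hNS, hNΔ⟩ := hS.2 _ (IsClubIn.diagInter hC)
  obtain ⟨x, hxN, hPx⟩ := hP N hNS
  exact Set.disjoint_left.1 (hSC x) ⟨hNS, hPx⟩ (hNΔ.2 x hxN)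

theorem IsStationaryIn.exists_fiber {β : Type*} {S : Set (Set γ)} (hS : IsStationaryIn A S)
    {g : Set γ → β} {t : Set β} (ht : t.Countable) (hg : Set.MapsTo g S t) :
    ∃ b ∈ t, IsStationaryIn A {N ∈ S | g N = b} := by
  by_contra! h
  choose C hC hSC using fun b : t => exists_isClubIn_disjoint_of_not_isStationaryIn
    (fun N hN => hS.1 hN.1) (h b b.2)
  have : Countable t := ht.to_subtype
  obtain ⟨N₀, hN₀⟩ := hS.nonempty
  have : Nonempty t := ⟨⟨g N₀, hg hN₀⟩⟩
  obtain ⟨N, hNS, hNC⟩ := hS.2 _ (IsClubIn.iInter hC)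
  exact Set.disjoint_left.1 (hSC ⟨g N, hg hNS⟩) ⟨hNS, rfl⟩ (Set.mem_iInter.1 hNC _)

end Club

theorem stmt_12_general {X : Type*} [TopologicalSpace X]
    (𝓑 : Set (Set X)) (hbase : TopologicalSpace.IsTopologicalBasis 𝓑)
    (hpc : ∀ x : X, {W ∈ 𝓑 | x ∈ W}.Countable)
    (F : Set X → X)
    (hF : ∀ N : Set X, N.Countable → (closure N \ N).Nonempty →
      F N ∈ closure N \ N)
    (U : X → ℕ → Set X)
    (hU1 : ∀ (x : X) (n : ℕ), U x n ∈ 𝓑 ∧ x ∈ U x n)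
    (S : Set (Set X))
    (hSsub : S ⊆ {N | N.Countable ∧ (closure N \ N).Nonempty})
    (hSstat : IsStationaryIn (Set.univ : Set X) S) (n : ℕ) :
    ∃ V ∈ 𝓑, IsStationaryIn (Set.univ : Set X) {N ∈ S | U (F N) n = V} := by
  have hmeet : ∀ N ∈ S, ∃ x ∈ N, x ∈ U (F N) n := by
    intro N hN
    obtain ⟨hcnt, hne⟩ := hSsub hN
    obtain ⟨x, hxU, hxN⟩ := mem_closure_iff.1 (hF N hcnt hne).1 _
      (hbase.isOpen (hU1 (F N) n).1) (hU1 (F N) n).2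
    exact ⟨x, hxN, hxU⟩
  obtain ⟨x, hx⟩ := hSstat.pressing_down hmeet
  obtain ⟨V, hV, hVstat⟩ := hx.exists_fiber (g := fun N => U (F N) n) (hpc x)
    fun N hN => ⟨(hU1 (F N) n).1, hN.2⟩
  exact ⟨V, hV.1, hVstat.mono (fun N hN => ⟨hN.1.1, hN.2⟩) fun N hN => hSstat.1 hN.1⟩

theorem stmt_12 {X : Type*} [TopologicalSpace X] [RegularSpace X]
    (𝓑 : Set (Set X)) (hbase : TopologicalSpace.IsTopologicalBasis 𝓑)
    (hpc : ∀ x : X, {W ∈ 𝓑 | x ∈ W}.Countable)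
    (hstat : IsStationaryIn (Set.univ : Set X)
      {N | N.Countable ∧ (closure N \ N).Nonempty})
    (F : Set X → X)
    (hF : ∀ N : Set X, N.Countable → (closure N \ N).Nonempty →
      F N ∈ closure N \ N)
    (U : X → ℕ → Set X)
    (hU1 : ∀ (x : X) (n : ℕ), U x n ∈ 𝓑 ∧ x ∈ U x n)
    (hU2 : ∀ x : X, ∀ W ∈ 𝓑, x ∈ W → ∃ n : ℕ, U x n = W)
    (S : Set (Set X))
    (hSsub : S ⊆ {N | N.Countable ∧ (closure N \ N).Nonempty})
    (hSstat : IsStationaryIn (Set.univ : Set X) S) (n : ℕ) :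
    ∃ V ∈ 𝓑, IsStationaryIn (Set.univ : Set X) {N ∈ S | U (F N) n = V} :=
  stmt_12_general 𝓑 hbase hpc F hF U hU1 S hSsub hSstat n
end
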